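/- arXiv:math/0110305 — 6 statements merged into one kernel-verified Lean document; each statement's English description precedes it below -/
import Mathlib

section
/- Let (X, R, μ) be a K-valued measure space. Define a relation κ on X by: x κ y if and only if every S ∈ R containing x also contains y. Then κ is an equivalence relation on X; the quotient map π : X → Y := X/κ together with the ring G := {π(A) : A ∈ R} satisfies π⁻¹(G) = R; the space Y, equipped with the zero-dimensional topology having base G, is a Hausdorff space; and ν(A) := μ(π⁻¹(A)) defines a K-valued measure on (Y, G) with ‖Y‖_ν = ‖X‖_μ. -/
open Set ENNReal

namespace NonArch

variable {X Y : Type*} {K : Type*}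

/-- A covering ring of subsets of `X`: a ring of subsets whose elements cover `X`. -/
structure IsCoveringRing (R : Set (Set X)) : Prop where
  union_mem : ∀ ⦃A B : Set X⦄, A ∈ R → B ∈ R → A ∪ B ∈ R
  inter_mem : ∀ ⦃A B : Set X⦄, A ∈ R → B ∈ R → A ∩ B ∈ R
  diff_mem : ∀ ⦃A B : Set X⦄, A ∈ R → B ∈ R → A \ B ∈ R
  covers : ∀ x : X, ∃ A ∈ R, x ∈ A

/-- `S` is a shrinking subfamily of `R`. -/
def IsShrinking (R S : Set (Set X)) : Prop :=
  S ⊆ R ∧ ∀ ⦃A⦄, A ∈ S → ∀ ⦃B⦄, B ∈ S → ∃ C ∈ S, C ⊆ A ∩ B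

/-- `lim_{A ∈ S} f A = 0` for a real-valued set function. -/
def TendstoZeroOn (S : Set (Set X)) (f : Set X → ℝ) : Prop :=
  ∀ ε : ℝ, 0 < ε → ∃ B ∈ S, ∀ A ∈ S, A ⊆ B → |f A| ≤ ε

section Measure

variable [NormedField K]

/-- The `μ`-norm `‖A‖_μ := sup{|μ B| : B ∈ R, B ⊆ A}`, as an extended nonnegative real. -/
noncomputable def mnorm (R : Set (Set X)) (μ : Set X → K) (A : Set X) : ℝ≥0∞ :=
  ⨆ (B : Set X) (_ : B ∈ R ∧ B ⊆ A), (‖μ B‖₊ : ℝ≥0∞)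

/-- `N_μ x := inf {‖U‖_μ : x ∈ U ∈ R}`. -/
noncomputable def Nmu (R : Set (Set X)) (μ : Set X → K) (x : X) : ℝ≥0∞ :=
  ⨅ (U : Set X) (_ : U ∈ R ∧ x ∈ U), mnorm R μ U

/-- A `K`-valued measure on `(X, R)`: finitely additive, bounded and continuous with
respect to shrinking families with empty intersection. -/
structure IsMeasure (R : Set (Set X)) (μ : Set X → K) : Prop where
  additive : ∀ ⦃A⦄, A ∈ R → ∀ ⦃B⦄, B ∈ R → Disjoint A B → μ (A ∪ B) = μ A + μ B
  bounded : ∀ ⦃A⦄, A ∈ R → mnorm R μ A < ⊤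
  shrink_cont : ∀ S : Set (Set X), IsShrinking R S → ⋂₀ S = ∅ →
    TendstoZeroOn S fun A => ‖μ A‖

/-- A probability `K`-valued measure on `(X, R)`. -/
structure IsProbability (R : Set (Set X)) (μ : Set X → K) : Prop where
  toIsMeasure : IsMeasure R μ
  univ_mem : Set.univ ∈ R
  measure_univ : μ Set.univ = 1
  mnorm_univ : mnorm R μ Set.univ = 1

/-- An `R`-step function: a finite `K`-linear combination of characteristic functions
of members of `R`. -/
def IsStep (R : Set (Set X)) (f : X → K) : Prop :=
  ∃ (n : ℕ) (c : Fin n → K) (A : Fin n → Set X),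
    (∀ i, A i ∈ R) ∧ ∀ x, f x = ∑ i, c i * (A i).indicator 1 x

/-- The norm `‖f‖_{N_μ} := sup_x ‖f x‖ N_μ(x)`. -/
noncomputable def fnorm (R : Set (Set X)) (μ : Set X → K) (f : X → K) : ℝ≥0∞ :=
  ⨆ x : X, (‖f x‖₊ : ℝ≥0∞) * Nmu R μ x

/-- The completion `R_μ` of `R` relative to `μ`: those subsets whose characteristic
functions are `‖·‖_{N_μ}`-limits of `R`-step functions. -/
def completion (R : Set (Set X)) (μ : Set X → K) : Set (Set X) :=
  {A | ∀ ε : ℝ≥0∞, 0 < ε → ∃ f : X → K, IsStep R f ∧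
    fnorm R μ (fun x => A.indicator 1 x - f x) ≤ ε}

end Measure

end NonArch

namespace NonArch

/-- The relation `κ`: `x κ y` iff every member of `R` containing `x` also contains `y`. -/
def kappa {X : Type*} (R : Set (Set X)) (x y : X) : Prop :=
  ∀ S ∈ R, x ∈ S → y ∈ S

/-- the relation `κ` is an equivalence relation, the quotient map `π` onto
`Y := X/κ` with the ring `G := π(R)` satisfies `π⁻¹(G) = R`, the space `Y` with the
zero-dimensional topology generated by the base `G` is Hausdorff, and
`ν A := μ (π ⁻¹' A)` is a `K`-valued measure on `(Y, G)` with `‖Y‖_ν = ‖X‖_μ`. -/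
theorem quotient_measure_space {X K : Type*} [NontriviallyNormedField K]
    [IsUltrametricDist K] [CompleteSpace K]
    (R : Set (Set X)) (hR : IsCoveringRing R) (μ : Set X → K) (hμ : IsMeasure R μ) :
    Equivalence (kappa R) ∧
    (∀ A ∈ R, (Quot.mk (kappa R)) ⁻¹' (Quot.mk (kappa R) '' A) = A) ∧
    ((fun B => Quot.mk (kappa R) ⁻¹' B) '' ((fun A => Quot.mk (kappa R) '' A) '' R) = R) ∧
    (@T2Space (Quot (kappa R))
      (TopologicalSpace.generateFrom ((fun A => Quot.mk (kappa R) '' A) '' R))) ∧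
    IsMeasure ((fun A => Quot.mk (kappa R) '' A) '' R)
      (fun B => μ ((Quot.mk (kappa R)) ⁻¹' B)) ∧
    mnorm ((fun A => Quot.mk (kappa R) '' A) '' R)
        (fun B => μ ((Quot.mk (kappa R)) ⁻¹' B)) Set.univ
      = mnorm R μ Set.univ := by
  have hequiv : Equivalence (kappa R) := by
    constructor
    · intro x S hS hx; exact hx
    · intro x y h S hS hyS
      by_contra hx
      obtain ⟨T, hT, hxT⟩ := hR.covers x
      have := h (T \ S) (hR.diff_mem hT hS) ⟨hxT, hx⟩
      exact this.2 hyS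
    · intro x y z h1 h2 S hS hx; exact h2 S hS (h1 S hS hx)
  have hmkeq : ∀ a b : X, Quot.mk (kappa R) a = Quot.mk (kappa R) b → kappa R a b := by
    intro a b h
    exact hequiv.eqvGen_iff.mp (Quot.eq.mp h)
  have hpre : ∀ A ∈ R, (Quot.mk (kappa R)) ⁻¹' (Quot.mk (kappa R) '' A) = A := by
    intro A hA
    ext x
    simp only [mem_preimage, mem_image]
    constructor
    · rintro ⟨a, haA, hq⟩; exact hmkeq a x hq A hA haA
    · intro hx; exact ⟨x, hx, rfl⟩
  refine ⟨hequiv, hpre, ?_, ?_, ?_, ?_⟩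
  · ext A
    constructor
    · rintro ⟨B, ⟨A₀, hA₀, rfl⟩, rfl⟩
      simpa [hpre A₀ hA₀] using hA₀
    · intro hA
      exact ⟨Quot.mk (kappa R) '' A, ⟨A, hA, rfl⟩, hpre A hA⟩
  · letI := TopologicalSpace.generateFrom ((fun A => Quot.mk (kappa R) '' A) '' R)
    constructor
    intro p q hpq
    obtain ⟨x, rfl⟩ := Quot.exists_rep p
    obtain ⟨y, rfl⟩ := Quot.exists_rep q
    have hnk : ¬ kappa R x y := fun h => hpq (Quot.sound h)
    simp only [kappa, not_forall] at hnk
    obtain ⟨S, hS, hxS, hyS⟩ := hnk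
    obtain ⟨T, hT, hyT⟩ := hR.covers y
    refine ⟨Quot.mk (kappa R) '' S, Quot.mk (kappa R) '' (T \ S),
      TopologicalSpace.GenerateOpen.basic _ ⟨S, hS, rfl⟩,
      TopologicalSpace.GenerateOpen.basic _ ⟨T \ S, hR.diff_mem hT hS, rfl⟩,
      ⟨x, hxS, rfl⟩, ⟨y, ⟨hyT, hyS⟩, rfl⟩, ?_⟩
    rw [Set.disjoint_left]
    rintro z ⟨s, hsS, rfl⟩ ⟨t, htTS, hts⟩
    exact htTS.2 (hmkeq s t hts.symm S hS hsS)
  · constructor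
    · rintro A ⟨A₀, hA₀, rfl⟩ B ⟨B₀, hB₀, rfl⟩ hdisj
      have hdisj' : Disjoint ((Quot.mk (kappa R)) ⁻¹' (Quot.mk (kappa R) '' A₀))
          ((Quot.mk (kappa R)) ⁻¹' (Quot.mk (kappa R) '' B₀)) :=
        Disjoint.preimage _ hdisj
      rw [hpre A₀ hA₀, hpre B₀ hB₀] at hdisj'
      simp only [preimage_union, hpre A₀ hA₀, hpre B₀ hB₀]
      exact hμ.additive hA₀ hB₀ hdisj'
    · rintro A ⟨A₀, hA₀, rfl⟩
      refine lt_of_le_of_lt ?_ (hμ.bounded hA₀)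
      refine iSup₂_le fun B hB => ?_
      obtain ⟨hBG, hBA⟩ := hB
      have h1 : (Quot.mk (kappa R)) ⁻¹' B ∈ R := by
        obtain ⟨B₀, hB₀, rfl⟩ := hBG
        rw [hpre B₀ hB₀]; exact hB₀
      have h2 : (Quot.mk (kappa R)) ⁻¹' B ⊆ A₀ := by
        rw [← hpre A₀ hA₀]; exact preimage_mono hBA
      exact le_iSup₂_of_le ((Quot.mk (kappa R)) ⁻¹' B) ⟨h1, h2⟩ le_rfl
    · intro S hS hInt
      set S' : Set (Set X) := (fun B => (Quot.mk (kappa R)) ⁻¹' B) '' S with hS'def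
      have hpremem : ∀ B ∈ S, (Quot.mk (kappa R)) ⁻¹' B ∈ R := by
        intro B hB
        obtain ⟨B₀, hB₀, rfl⟩ := hS.1 hB
        rw [hpre B₀ hB₀]; exact hB₀
      have hshr : IsShrinking R S' := by
        constructor
        · rintro B' ⟨B, hB, rfl⟩; exact hpremem B hB
        · rintro A' ⟨A, hA, rfl⟩ B' ⟨B, hB, rfl⟩
          obtain ⟨C, hC, hCsub⟩ := hS.2 hA hB
          exact ⟨(Quot.mk (kappa R)) ⁻¹' C, ⟨C, hC, rfl⟩, by
            simpa [preimage_inter] using preimage_mono (f := Quot.mk (kappa R)) hCsub⟩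
      have hInt' : ⋂₀ S' = ∅ := by
        have : ⋂₀ S' = (Quot.mk (kappa R)) ⁻¹' ⋂₀ S := by
          rw [sInter_image, preimage_sInter]
        rw [this, hInt, preimage_empty]
      intro ε hε
      obtain ⟨B', hB'S', hbound⟩ := hμ.shrink_cont S' hshr hInt' ε hε
      obtain ⟨B, hBS, rfl⟩ := hB'S'
      refine ⟨B, hBS, fun A hAS hAB => ?_⟩
      exact hbound _ ⟨A, hAS, rfl⟩ (preimage_mono hAB)
  · apply le_antisymm
    · refine iSup₂_le fun B hB => ?_
      have h1 : (Quot.mk (kappa R)) ⁻¹' B ∈ R := by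
        obtain ⟨B₀, hB₀, rfl⟩ := hB.1
        rw [hpre B₀ hB₀]; exact hB₀
      exact le_iSup₂_of_le ((Quot.mk (kappa R)) ⁻¹' B) ⟨h1, subset_univ _⟩ le_rfl
    · refine iSup₂_le fun B hB => ?_
      refine le_iSup₂_of_le (Quot.mk (kappa R) '' B) ⟨⟨B, hB.1, rfl⟩, subset_univ _⟩ ?_
      simp only [hpre B hB.1]
      exact le_rfl

end NonArch
end

section
/- Let {(X_j, R_j, μ_j) : j ∈ ℕ} be a sequence of bounded K-valued measure spaces, X := ∏_{j∈ℕ} X_j, R the ring of cylinder sets of X, and μ the product cylindrical distribution on R given by μ(⋂_{l=1}^{n} π_{j_l}⁻¹(A_l)) = ∏_{l=1}^{n} μ_{j_l}(A_l). If ∏_{j=1}^{∞} ‖X_j‖_{μ_j} = 0, then N_μ(x) = 0 for every x ∈ X, so sup_{x∈X} N_μ(x) = 0; and if ∏_{j=1}^{∞} ‖X_j‖_{μ_j} = ∞, then sup_{A∈R} ‖A‖_μ = ∞, i.e. the cylindrical distribution is unbounded on X. -/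
open Set ENNReal

namespace NonArch

open Filter

/-- The ring of cylinder subsets of a product `∏ j, X j`. -/
def cylinderRing {ι : Type*} {X : ι → Type*} (R : ∀ j, Set (Set (X j))) :
    Set (Set (∀ j, X j)) :=
  {C | ∃ (n : ℕ) (t : Fin n → ι), Function.Injective t ∧
    ∃ A : (i : Fin n) → Set (X (t i)), (∀ i, A i ∈ R (t i)) ∧
      C = ⋂ i : Fin n, (fun x : ∀ j, X j => x (t i)) ⁻¹' A i}

/-!
Padding a cylinder with sides `univ` at its free coordinates `j < N` writes `m B` as a product
`∏_{j<N} μ_j(B_j)`, so `‖m B‖ ≤ ∏_{j<N} ‖X_j‖_{μ_j}` for all large `N`. If these partial products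
tend to `0`, then `m` vanishes on all cylinders, hence `‖X‖_m = 0` and `N_m ≡ 0`. Conversely the
boxes `∏_{j<n} B_j` are cylinders with `|m| = ∏ |μ_j(B_j)|`, and taking the supremum over the
`B_j` gives `∏_{j<n} ‖X_j‖_{μ_j} ≤ sup_A ‖A‖_m`.
-/

theorem _root_.ENNReal.prod_iSup_le_iSup_prod {α : Type*} {ι : α → Type*} [∀ a, Nonempty (ι a)]
    (s : Finset α) (f : ∀ a, ι a → ℝ≥0∞) :
    ∏ a ∈ s, ⨆ i, f a i ≤ ⨆ g : (∀ a, ι a), ∏ a ∈ s, f a (g a) := by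
  classical
  induction s using Finset.induction_on with
  | empty => simp
  | insert a s ha ih =>
    rw [Finset.prod_insert ha]
    calc (⨆ i, f a i) * ∏ b ∈ s, ⨆ i, f b i
        ≤ (⨆ i, f a i) * ⨆ g : (∀ b, ι b), ∏ b ∈ s, f b (g b) := by gcongr
      _ = ⨆ (g : ∀ b, ι b) (i), f a i * ∏ b ∈ s, f b (g b) := by
        simp only [ENNReal.iSup_mul, ENNReal.mul_iSup]
      _ ≤ ⨆ g : (∀ b, ι b), ∏ b ∈ insert a s, f b (g b) := by
        refine iSup₂_le fun g i => le_iSup_of_le (Function.update g a i) ?_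
        rw [Finset.prod_insert ha, Function.update_self]
        gcongr with b hb
        rw [Function.update_of_ne (ne_of_mem_of_not_mem hb ha)]

section SetFunction

variable {X K : Type*} [NormedField K] {R : Set (Set X)} {μ : Set X → K}

theorem coe_nnnorm_le_mnorm {A B : Set X} (hB : B ∈ R) (hBA : B ⊆ A) :
    (‖μ B‖₊ : ℝ≥0∞) ≤ mnorm R μ A :=
  le_iSup₂_of_le B ⟨hB, hBA⟩ le_rfl

theorem mnorm_univ_eq_iSup (R : Set (Set X)) (μ : Set X → K) :
    mnorm R μ univ = ⨆ B : R, (‖μ B‖₊ : ℝ≥0∞) := by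
  simp [mnorm, iSup_subtype]

theorem mnorm_eq_zero_of_forall (h : ∀ B ∈ R, μ B = 0) (A : Set X) : mnorm R μ A = 0 := by
  simp +contextual [mnorm, h]

theorem Nmu_le_mnorm {U : Set X} {x : X} (hU : U ∈ R) (hx : x ∈ U) :
    Nmu R μ x ≤ mnorm R μ U :=
  iInf₂_le U ⟨hU, hx⟩

end SetFunction

section Cylinder

variable {ι : Type*} {X : ι → Type*}

theorem univ_mem_cylinderRing (R : ∀ j, Set (Set (X j))) : univ ∈ cylinderRing R :=
  ⟨0, Fin.elim0, fun i => i.elim0, fun i => i.elim0, fun i => i.elim0, (iInter_of_empty _).symm⟩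

/-- For injective `t`, the `j`-th side of the cylinder `⋂ l, π_{t l}⁻¹ (A l)`: `A l` at `j = t l`
and `univ` off the range of `t`. The intersection form avoids choosing the preimage of `j`. -/
def cylinderSide {n : ℕ} (t : Fin n → ι) (A : (l : Fin n) → Set (X (t l))) (j : ι) :
    Set (X j) :=
  ⋂ (l : Fin n) (h : t l = j), h ▸ A l

variable {n : ℕ} {t : Fin n → ι} {A : (l : Fin n) → Set (X (t l))}

theorem preimage_cylinderSide (j : ι) :
    (fun x : ∀ j, X j => x j) ⁻¹' cylinderSide t A j =
      ⋂ (l : Fin n) (_ : t l = j), (fun x : ∀ j, X j => x (t l)) ⁻¹' A l := by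
  simp only [cylinderSide, preimage_iInter]
  refine iInter_congr fun l => iInter_congr fun h => ?_
  subst h
  rfl

theorem cylinderSide_apply (ht : Function.Injective t) (l : Fin n) :
    cylinderSide t A (t l) = A l := by
  refine Subset.antisymm (fun x hx => mem_iInter₂.1 hx l rfl) (subset_iInter₂ fun l' h => ?_)
  obtain rfl := ht h
  rfl

theorem cylinderSide_of_notMem_range {j : ι} (hj : j ∉ range t) : cylinderSide t A j = univ :=
  iInter_eq_univ.2 fun l => iInter_eq_univ.2 fun h => (hj ⟨l, h⟩).elim

theorem cylinderSide_mem {R : ∀ j, Set (Set (X j))} (ht : Function.Injective t)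
    (hA : ∀ l, A l ∈ R (t l)) (huniv : ∀ j, univ ∈ R j) (j : ι) : cylinderSide t A j ∈ R j := by
  by_cases hj : j ∈ range t
  · obtain ⟨l, rfl⟩ := hj
    rw [cylinderSide_apply ht]
    exact hA l
  · rw [cylinderSide_of_notMem_range hj]
    exact huniv j

theorem iInter_preimage_cylinderSide {N : ℕ} {u : Fin N → ι} (hu : ∀ l, t l ∈ range u) :
    ⋂ i : Fin N, (fun x : ∀ j, X j => x (u i)) ⁻¹' cylinderSide t A (u i) =
      ⋂ l : Fin n, (fun x : ∀ j, X j => x (t l)) ⁻¹' A l := by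
  simp only [preimage_cylinderSide]
  ext x
  simp only [mem_iInter]
  refine ⟨fun hx l => ?_, fun hx i l _ => hx l⟩
  obtain ⟨i, hi⟩ := hu l
  exact hx i l hi.symm

end Cylinder

def IsProductDistribution {X : ℕ → Type*} {K : Type*} [NormedField K]
    (R : ∀ j, Set (Set (X j))) (μ : ∀ j, Set (X j) → K) (m : Set (∀ j, X j) → K) : Prop :=
  ∀ (n : ℕ) (t : Fin n → ℕ), Function.Injective t →
    ∀ A : (i : Fin n) → Set (X (t i)), (∀ i, A i ∈ R (t i)) →
      m (⋂ i : Fin n, (fun x : ∀ j, X j => x (t i)) ⁻¹' A i) = ∏ i, μ (t i) (A i)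

namespace IsProductDistribution

variable {X : ℕ → Type*} {K : Type*} [NormedField K] {R : ∀ j, Set (Set (X j))}
  {μ : ∀ j, Set (X j) → K} {m : Set (∀ j, X j) → K}

theorem nnnorm_le_prod_mnorm_univ (hm : IsProductDistribution R μ m) (huniv : ∀ j, univ ∈ R j)
    {n : ℕ} {t : Fin n → ℕ} (ht : Function.Injective t) {A : (l : Fin n) → Set (X (t l))}
    (hA : ∀ l, A l ∈ R (t l)) {N : ℕ} (hN : ∀ l, t l < N) :
    (‖m (⋂ l, (fun x : ∀ j, X j => x (t l)) ⁻¹' A l)‖₊ : ℝ≥0∞) ≤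
      ∏ j ∈ Finset.range N, mnorm (R j) (μ j) univ := by
  rw [← iInter_preimage_cylinderSide (u := Fin.val) fun l => ⟨⟨t l, hN l⟩, rfl⟩,
    hm N Fin.val Fin.val_injective _ fun i => cylinderSide_mem ht hA huniv i,
    nnnorm_prod, ENNReal.ofNNReal_finsetProd, ← Fin.prod_univ_eq_prod_range]
  exact Finset.prod_le_prod' fun i _ =>
    coe_nnnorm_le_mnorm (cylinderSide_mem ht hA huniv i) (subset_univ _)

theorem eventually_nnnorm_le_prod_mnorm_univ (hm : IsProductDistribution R μ m)
    (huniv : ∀ j, univ ∈ R j) {B : Set (∀ j, X j)} (hB : B ∈ cylinderRing R) :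
    ∀ᶠ N in atTop, (‖m B‖₊ : ℝ≥0∞) ≤ ∏ j ∈ Finset.range N, mnorm (R j) (μ j) univ := by
  obtain ⟨n, t, ht, A, hA, rfl⟩ := hB
  filter_upwards [eventually_all.2 fun l => eventually_gt_atTop (t l)] with N hN
  exact hm.nnnorm_le_prod_mnorm_univ huniv ht hA hN

theorem eq_zero_of_tendsto_zero (hm : IsProductDistribution R μ m) (huniv : ∀ j, univ ∈ R j)
    (h : Tendsto (fun n => ∏ j ∈ Finset.range n, mnorm (R j) (μ j) univ) atTop (nhds 0))
    {B : Set (∀ j, X j)} (hB : B ∈ cylinderRing R) : m B = 0 := by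
  have hle : (‖m B‖₊ : ℝ≥0∞) ≤ 0 :=
    ge_of_tendsto h (hm.eventually_nnnorm_le_prod_mnorm_univ huniv hB)
  simpa using hle

theorem prod_mnorm_univ_le_iSup_mnorm (hm : IsProductDistribution R μ m)
    (huniv : ∀ j, univ ∈ R j) (n : ℕ) :
    ∏ j ∈ Finset.range n, mnorm (R j) (μ j) univ ≤
      ⨆ (C : Set (∀ j, X j)) (_ : C ∈ cylinderRing R), mnorm (cylinderRing R) m C := by
  have : ∀ j, Nonempty (R j) := fun j => ⟨⟨univ, huniv j⟩⟩
  simp only [mnorm_univ_eq_iSup]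
  refine (ENNReal.prod_iSup_le_iSup_prod _ _).trans (iSup_le fun B => ?_)
  have hC : (⋂ i : Fin n, (fun x : ∀ j, X j => x i) ⁻¹' (B i : Set (X i))) ∈ cylinderRing R :=
    ⟨n, Fin.val, Fin.val_injective, fun i => B i, fun i => (B i).2, rfl⟩
  refine le_iSup₂_of_le _ hC (le_of_eq_of_le ?_ (coe_nnnorm_le_mnorm hC subset_rfl))
  rw [hm n Fin.val Fin.val_injective _ fun i => (B i).2, nnnorm_prod, ENNReal.ofNNReal_finsetProd,
    Fin.prod_univ_eq_prod_range (fun j => (‖μ j (B j)‖₊ : ℝ≥0∞))]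

end IsProductDistribution

theorem product_degenerate_cases_general {X : ℕ → Type*} {K : Type*}
    [NontriviallyNormedField K]
    (R : ∀ j : ℕ, Set (Set (X j))) (μ : ∀ j : ℕ, Set (X j) → K)
    (huniv : ∀ j, Set.univ ∈ R j)
    (m : Set (∀ j, X j) → K)
    (hm : ∀ (n : ℕ) (t : Fin n → ℕ), Function.Injective t →
      ∀ A : (i : Fin n) → Set (X (t i)), (∀ i, A i ∈ R (t i)) →
        m (⋂ i : Fin n, (fun x : ∀ j, X j => x (t i)) ⁻¹' A i) = ∏ i, μ (t i) (A i)) :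
    (Tendsto (fun n : ℕ => ∏ j ∈ Finset.range n, mnorm (R j) (μ j) Set.univ)
        atTop (nhds 0) →
      (∀ x : ∀ j, X j, Nmu (cylinderRing R) m x = 0) ∧
        (⨆ x : ∀ j, X j, Nmu (cylinderRing R) m x) = 0) ∧
    (Tendsto (fun n : ℕ => ∏ j ∈ Finset.range n, mnorm (R j) (μ j) Set.univ)
        atTop (nhds ⊤) →
      (⨆ (A : Set (∀ j, X j)) (_ : A ∈ cylinderRing R),
        mnorm (cylinderRing R) m A) = ⊤) := by
  have hm : IsProductDistribution R μ m := hm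
  refine ⟨fun h0 => ?_, fun htop => ?_⟩
  · have hN : ∀ x, Nmu (cylinderRing R) m x = 0 := fun x =>
      nonpos_iff_eq_zero.1 <| (Nmu_le_mnorm (univ_mem_cylinderRing R) (mem_univ x)).trans_eq
        (mnorm_eq_zero_of_forall (fun _ => hm.eq_zero_of_tendsto_zero huniv h0) _)
    exact ⟨hN, by simp [hN]⟩
  · exact top_unique <| le_of_tendsto htop <|
      Eventually.of_forall (hm.prod_mnorm_univ_le_iSup_mnorm huniv)

/-- for a sequence of bounded `K`-valued measure spaces and the product
cylindrical distribution `m` on the ring of cylinder sets, if `∏_{j=1}^∞ ‖X_j‖_{μ_j} = 0`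
then `N_m(x) = 0` for every `x` (so `sup_x N_m(x) = 0`); and if
`∏_{j=1}^∞ ‖X_j‖_{μ_j} = ∞` then `sup_{A ∈ R} ‖A‖_m = ∞`, i.e. `m` is unbounded. -/
theorem product_degenerate_cases {X : ℕ → Type*} {K : Type*}
    [NontriviallyNormedField K] [IsUltrametricDist K] [CompleteSpace K]
    (R : ∀ j : ℕ, Set (Set (X j))) (μ : ∀ j : ℕ, Set (X j) → K)
    (hring : ∀ j, IsCoveringRing (R j)) (huniv : ∀ j, Set.univ ∈ R j)
    (hmeas : ∀ j, IsMeasure (R j) (μ j))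
    (m : Set (∀ j, X j) → K)
    (hm : ∀ (n : ℕ) (t : Fin n → ℕ), Function.Injective t →
      ∀ A : (i : Fin n) → Set (X (t i)), (∀ i, A i ∈ R (t i)) →
        m (⋂ i : Fin n, (fun x : ∀ j, X j => x (t i)) ⁻¹' A i) = ∏ i, μ (t i) (A i)) :
    (Tendsto (fun n : ℕ => ∏ j ∈ Finset.range n, mnorm (R j) (μ j) Set.univ)
        atTop (nhds 0) →
      (∀ x : ∀ j, X j, Nmu (cylinderRing R) m x = 0) ∧
        (⨆ x : ∀ j, X j, Nmu (cylinderRing R) m x) = 0) ∧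
    (Tendsto (fun n : ℕ => ∏ j ∈ Finset.range n, mnorm (R j) (μ j) Set.univ)
        atTop (nhds ⊤) →
      (⨆ (A : Set (∀ j, X j)) (_ : A ∈ cylinderRing R),
        mnorm (cylinderRing R) m A) = ⊤) :=
  product_degenerate_cases_general R μ huniv m hm

end NonArch
end

section
/- Let R be a covering ring of a set X and μ : R → K a finitely additive, bounded set function (‖A‖_μ := sup{|μ(B)| : B ∈ R, B ⊆ A} < ∞ for every A ∈ R). Then the following are equivalent: (a) for every shrinking family S ⊆ R with ⋂S = ∅, lim_{A∈S} μ(A) = 0; (b) for every shrinking family S ⊆ R with ⋂S = ∅, lim_{A∈S} ‖A‖_μ = 0. -/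
open Set ENNReal

/-!
For (a) ⇒ (b), fix `ε` and apply (a) to the upward closure of `S` in `R`: this yields `A₀ ∈ S`
such that `|μ D| ≤ ε` for every `D ∈ R` with `D ⊆ A₀` containing a member of `S`. Suppose some
`C ∈ R` with `C ⊆ A ⊆ A₀`, `A ∈ S`, had `|μ C| > ε`. Inclusion–exclusion and the ultrametric
inequality give `|μ C| ≤ max (|μ (C ∪ A')|, |μ (C ∩ A')|, |μ A'|)` for `A' ∈ S`, `A' ⊆ A`, and the
first and last terms are `≤ ε`; hence `|μ (C ∩ A')| > ε` for all such `A'`, contradicting (a) for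
the shrinking family `{A' ∩ C : A' ∈ S}`, whose intersection is empty.
-/

namespace NonArch

section Families

variable {X : Type*} {R S : Set (Set X)}

def upClosure (R S : Set (Set X)) : Set (Set X) :=
  {C ∈ R | ∃ A ∈ S, A ⊆ C}

theorem IsShrinking.subset_upClosure (hS : IsShrinking R S) : S ⊆ upClosure R S :=
  fun A hA => ⟨hS.1 hA, A, hA, subset_rfl⟩

theorem IsShrinking.upClosure (hS : IsShrinking R S) : IsShrinking R (upClosure R S) := by
  refine ⟨fun C hC => hC.1, ?_⟩
  rintro C₁ ⟨-, A₁, hA₁, hA₁C₁⟩ C₂ ⟨-, A₂, hA₂, hA₂C₂⟩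
  obtain ⟨A₃, hA₃, hA₃sub⟩ := hS.2 hA₁ hA₂
  exact ⟨A₃, hS.subset_upClosure hA₃, hA₃sub.trans (inter_subset_inter hA₁C₁ hA₂C₂)⟩

theorem IsShrinking.image_inter_right (hR : IsCoveringRing R) (hS : IsShrinking R S)
    {C : Set X} (hC : C ∈ R) : IsShrinking R ((· ∩ C) '' S) := by
  refine ⟨?_, ?_⟩
  · rintro _ ⟨A, hA, rfl⟩
    exact hR.inter_mem (hS.1 hA) hC
  · rintro _ ⟨A₁, hA₁, rfl⟩ _ ⟨A₂, hA₂, rfl⟩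
    obtain ⟨A₃, hA₃, hA₃sub⟩ := hS.2 hA₁ hA₂
    refine ⟨A₃ ∩ C, mem_image_of_mem _ hA₃, ?_⟩
    rw [← inter_inter_distrib_right]
    exact inter_subset_inter_left C hA₃sub

theorem sInter_image_inter_right_subset (S : Set (Set X)) (C : Set X) :
    ⋂₀ ((· ∩ C) '' S) ⊆ ⋂₀ S :=
  fun _ hx _ hA => (hx _ (mem_image_of_mem _ hA)).1

end Families

section Additive

variable {X E : Type*} {R : Set (Set X)}

theorem add_union_inter [AddCommMonoid E] {μ : Set X → E} (hR : IsCoveringRing R)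
    (hadd : ∀ ⦃A⦄, A ∈ R → ∀ ⦃B⦄, B ∈ R → Disjoint A B → μ (A ∪ B) = μ A + μ B)
    {A B : Set X} (hA : A ∈ R) (hB : B ∈ R) :
    μ (A ∪ B) + μ (A ∩ B) = μ A + μ B := by
  have hunion : μ (A ∪ B) = μ A + μ (B \ A) := by
    rw [← union_sdiff_self]
    exact hadd hA (hR.diff_mem hB hA) disjoint_sdiff_right
  have hB_split : μ B = μ (B \ A) + μ (A ∩ B) := by
    rw [← hadd (hR.diff_mem hB hA) (hR.inter_mem hA hB)
      (disjoint_sdiff_left.mono_right inter_subset_left), inter_comm, sdiff_union_inter]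
  rw [hunion, hB_split, add_assoc]

theorem norm_le_max_union_inter [NormedAddCommGroup E] [IsUltrametricDist E] {μ : Set X → E}
    (hR : IsCoveringRing R)
    (hadd : ∀ ⦃A⦄, A ∈ R → ∀ ⦃B⦄, B ∈ R → Disjoint A B → μ (A ∪ B) = μ A + μ B)
    {A B : Set X} (hA : A ∈ R) (hB : B ∈ R) :
    ‖μ A‖ ≤ max (max ‖μ (A ∪ B)‖ ‖μ (A ∩ B)‖) ‖μ B‖ := by
  rw [eq_add_neg_of_add_eq (add_union_inter hR hadd hA hB).symm]
  refine (IsUltrametricDist.norm_add_le_max _ _).trans ?_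
  rw [norm_neg]
  exact max_le_max_right _ (IsUltrametricDist.norm_add_le_max _ _)

theorem exists_forall_norm_le_of_tendstoZeroOn [NormedAddCommGroup E] [IsUltrametricDist E]
    {μ : Set X → E} (hR : IsCoveringRing R)
    (hadd : ∀ ⦃A⦄, A ∈ R → ∀ ⦃B⦄, B ∈ R → Disjoint A B → μ (A ∪ B) = μ A + μ B)
    (hcont : ∀ S : Set (Set X), IsShrinking R S → ⋂₀ S = ∅ → TendstoZeroOn S fun A => ‖μ A‖)
    {S : Set (Set X)} (hS : IsShrinking R S) (hS_empty : ⋂₀ S = ∅) {t : ℝ} (ht : 0 < t) :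
    ∃ A₀ ∈ S, ∀ A ∈ S, A ⊆ A₀ → ∀ C ∈ R, C ⊆ A → ‖μ C‖ ≤ t := by
  obtain ⟨B₀, ⟨-, A₀, hA₀, hA₀B₀⟩, hB₀⟩ := hcont _ hS.upClosure
    (subset_empty_iff.1 ((sInter_subset_sInter hS.subset_upClosure).trans hS_empty.le)) t ht
  refine ⟨A₀, hA₀, fun A hA hAA₀ C hC hCA => ?_⟩
  have hsmall : ∀ D ∈ upClosure R S, D ⊆ A → ‖μ D‖ ≤ t := fun D hD hDA => by
    simpa using hB₀ D hD (hDA.trans (hAA₀.trans hA₀B₀))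
  by_contra! hCt
  obtain ⟨_, ⟨A₁, hA₁, rfl⟩, hA₁C⟩ := hcont _ (hS.image_inter_right hR hC)
    (subset_empty_iff.1 ((sInter_image_inter_right_subset S C).trans hS_empty.le)) t ht
  obtain ⟨A₂, hA₂, hA₂sub⟩ := hS.2 hA₁ hA
  have hA₂A : A₂ ⊆ A := hA₂sub.trans inter_subset_right
  have hunion : ‖μ (C ∪ A₂)‖ ≤ t :=
    hsmall _ ⟨hR.union_mem hC (hS.1 hA₂), A₂, hA₂, subset_union_right⟩ (union_subset hCA hA₂A)
  have hinter : ‖μ (C ∩ A₂)‖ ≤ t := by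
    rw [inter_comm]
    simpa using hA₁C _ (mem_image_of_mem _ hA₂) (inter_subset_inter_left C
      (hA₂sub.trans inter_subset_left))
  have hA₂t : ‖μ A₂‖ ≤ t := hsmall _ (hS.subset_upClosure hA₂) hA₂A
  exact hCt.not_ge ((norm_le_max_union_inter hR hadd hC (hS.1 hA₂)).trans
    (max_le (max_le hunion hinter) hA₂t))

end Additive

theorem mnorm_le_ofReal_iff {X K : Type*} [NormedField K] {R : Set (Set X)} {μ : Set X → K}
    {A : Set X} {t : ℝ} (ht : 0 ≤ t) :
    mnorm R μ A ≤ ENNReal.ofReal t ↔ ∀ B ∈ R, B ⊆ A → ‖μ B‖ ≤ t := by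
  simp only [mnorm, iSup_le_iff, and_imp, ← enorm_eq_nnnorm, ← ofReal_norm,
    ENNReal.ofReal_le_ofReal_iff ht]

theorem shrinking_continuity_iff_mnorm_continuity_general {X K : Type*}
    [NontriviallyNormedField K] [IsUltrametricDist K]
    (R : Set (Set X)) (hR : IsCoveringRing R) (μ : Set X → K)
    (hadd : ∀ ⦃A⦄, A ∈ R → ∀ ⦃B⦄, B ∈ R → Disjoint A B → μ (A ∪ B) = μ A + μ B) :
    (∀ S : Set (Set X), IsShrinking R S → ⋂₀ S = ∅ →
      TendstoZeroOn S fun A => ‖μ A‖) ↔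
    (∀ S : Set (Set X), IsShrinking R S → ⋂₀ S = ∅ →
      ∀ ε : ℝ≥0∞, 0 < ε → ∃ B ∈ S, ∀ A ∈ S, A ⊆ B → mnorm R μ A ≤ ε) := by
  constructor
  · intro hcont S hS hS_empty ε hε
    obtain ⟨t, -, ht, htε⟩ := ENNReal.lt_iff_exists_real_btwn.1 hε
    obtain ⟨A₀, hA₀, hsmall⟩ :=
      exists_forall_norm_le_of_tendstoZeroOn hR hadd hcont hS hS_empty (ofReal_pos.1 ht)
    exact ⟨A₀, hA₀, fun A hA hAA₀ =>
      ((mnorm_le_ofReal_iff (ofReal_pos.1 ht).le).2 (hsmall A hA hAA₀)).trans htε.le⟩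
  · intro hmnorm S hS hS_empty ε hε
    obtain ⟨B, hB, hsmall⟩ := hmnorm S hS hS_empty (ENNReal.ofReal ε) (ofReal_pos.2 hε)
    refine ⟨B, hB, fun A hA hAB => ?_⟩
    rw [abs_norm]
    exact (mnorm_le_ofReal_iff hε.le).1 (hsmall A hA hAB) A (hS.1 hA) subset_rfl

/-- for a finitely additive bounded set function `μ` on a covering ring
`R`, continuity `lim_{A∈S} μ A = 0` on all shrinking families `S` with empty
intersection is equivalent to `lim_{A∈S} ‖A‖_μ = 0` on all such families. -/
theorem shrinking_continuity_iff_mnorm_continuity {X K : Type*}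
    [NontriviallyNormedField K] [IsUltrametricDist K] [CompleteSpace K]
    (R : Set (Set X)) (hR : IsCoveringRing R) (μ : Set X → K)
    (hadd : ∀ ⦃A⦄, A ∈ R → ∀ ⦃B⦄, B ∈ R → Disjoint A B → μ (A ∪ B) = μ A + μ B)
    (hbdd : ∀ ⦃A⦄, A ∈ R → mnorm R μ A < ⊤) :
    (∀ S : Set (Set X), IsShrinking R S → ⋂₀ S = ∅ →
      TendstoZeroOn S fun A => ‖μ A‖) ↔
    (∀ S : Set (Set X), IsShrinking R S → ⋂₀ S = ∅ →
      ∀ ε : ℝ≥0∞, 0 < ε → ∃ B ∈ S, ∀ A ∈ S, A ⊆ B → mnorm R μ A ≤ ε) :=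
  shrinking_continuity_iff_mnorm_continuity_general R hR μ hadd

end NonArch
end

section
/- Let (K, d) be an ultrametric space and n ≥ 2. On K^n let d^n(x, y) := max_{1≤i≤n} d(x_i, y_i), let K̃^n := {x ∈ K^n : x_i ≠ x_j for all i ≠ j}, and for x ∈ K^n and A ⊆ K^n let d^n(x, A) := inf_{a∈A} d^n(x, a). Define δ(x, y) := d^n(x, y) / max( d^n(x, y), d^n(x, (K̃^n)^c), d^n(y, (K̃^n)^c) ) for x, y ∈ K̃^n, where (K̃^n)^c := K^n ∖ K̃^n. Then δ is an ultrametric on K̃^n: δ(x, y) = 0 iff x = y, δ(x, y) = δ(y, x), and δ(x, y) ≤ max( δ(x, z), δ(z, y) ) for all x, y, z ∈ K̃^n. -/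
/-!
In an ultrametric space the distance to a set satisfies `d(z, S) ≤ max (d(z, y)) (d(y, S))`.
Write `δ(x, y) = t / max t m` with `t = d(x, y)` and `m = max (d(x, S)) (d(y, S))`: the quotient
grows with `t`, and it does not decrease when `m` is replaced by anything below `max t m`.
If `d(z, y) ≤ d(x, z)`, then `d(x, y) ≤ d(x, z)` and `d(z, S) ≤ max (d(x, z)) (d(y, S))`, which
together give `δ(x, y) ≤ δ(x, z)`; the other case is symmetric.
-/

namespace NonArch

/-- The configuration set `K̃ⁿ` of tuples with pairwise distinct coordinates. -/
def distinctTuples (K : Type*) (n : ℕ) : Set (Fin n → K) :=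
  {x | ∀ i j : Fin n, i ≠ j → x i ≠ x j}

/-- The ultrametric `δ` on `K̃ⁿ`, built from the sup metric `dⁿ` on `Kⁿ` and the
distances to the complement `(K̃ⁿ)ᶜ`. -/
noncomputable def deltaDist {K : Type*} [MetricSpace K] {n : ℕ}
    (x y : Fin n → K) : ℝ :=
  dist x y /
    max (dist x y)
      (max (Metric.infDist x (distinctTuples K n)ᶜ)
        (Metric.infDist y (distinctTuples K n)ᶜ))

theorem div_max_le_div_max_of_le {t t' m : ℝ} (ht : 0 ≤ t) (hm : 0 ≤ m) (htt' : t ≤ t') :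
    t / max t m ≤ t' / max t' m := by
  rcases ht.eq_or_lt with rfl | ht
  · rw [zero_div]
    exact div_nonneg (ht.trans htt') (hm.trans (le_max_right _ _))
  have ht' : 0 < t' := ht.trans_le htt'
  rw [div_le_div_iff₀ (ht.trans_le (le_max_left _ _)) (ht'.trans_le (le_max_left _ _)),
    mul_max_of_nonneg _ _ ht.le, mul_max_of_nonneg _ _ ht'.le, mul_comm t' t]
  exact max_le_max le_rfl (mul_le_mul_of_nonneg_right htt' hm)

theorem div_max_le_div_max_of_le_max {t m m' : ℝ} (ht : 0 ≤ t) (hm' : m' ≤ max t m) :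
    t / max t m ≤ t / max t m' := by
  rcases ht.eq_or_lt with rfl | ht
  · simp
  exact div_le_div_of_nonneg_left ht.le (ht.trans_le (le_max_left _ _))
    (max_le (le_max_left _ _) hm')

theorem IsUltrametricDist.infDist_le_max {X : Type*} [PseudoMetricSpace X] [IsUltrametricDist X]
    (S : Set X) (y z : X) :
    Metric.infDist z S ≤ max (dist z y) (Metric.infDist y S) := by
  rcases S.eq_empty_or_nonempty with rfl | hS
  · simp
  by_contra! h
  obtain ⟨a, haS, hya⟩ :=
    (Metric.infDist_lt_iff hS).mp ((le_max_right _ _).trans_lt h)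
  have hza : dist z a < Metric.infDist z S :=
    (IsUltrametricDist.dist_triangle_max z y a).trans_lt
      (max_lt ((le_max_left _ _).trans_lt h) hya)
  exact hza.not_ge (Metric.infDist_le_dist_of_mem haS)

/-- `deltaDist` with an arbitrary set `S` in place of `(K̃ⁿ)ᶜ`. -/
noncomputable def relDist {X : Type*} [PseudoMetricSpace X] (S : Set X) (x y : X) : ℝ :=
  dist x y / max (dist x y) (max (Metric.infDist x S) (Metric.infDist y S))

theorem relDist_eq_zero_iff {X : Type*} [MetricSpace X] (S : Set X) {x y : X} :
    relDist S x y = 0 ↔ x = y := by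
  rw [relDist, div_eq_zero_iff, dist_eq_zero, or_iff_left_iff_imp]
  intro h
  by_contra hxy
  exact (dist_pos.mpr hxy).ne' (le_antisymm (h ▸ le_max_left _ _) dist_nonneg)

section relDist

variable {X : Type*} [PseudoMetricSpace X] (S : Set X)

theorem relDist_comm (x y : X) : relDist S x y = relDist S y x := by
  rw [relDist, relDist, dist_comm, max_comm (Metric.infDist x S)]

variable [IsUltrametricDist X]

theorem relDist_le_of_dist_le {x y z : X} (h : dist z y ≤ dist x z) :
    relDist S x y ≤ relDist S x z := by
  have hxy : dist x y ≤ dist x z :=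
    (IsUltrametricDist.dist_triangle_max x z y).trans (max_le le_rfl h)
  have hz : Metric.infDist z S ≤ max (dist x z) (Metric.infDist y S) :=
    (IsUltrametricDist.infDist_le_max S y z).trans (max_le_max h le_rfl)
  calc relDist S x y
      ≤ dist x z / max (dist x z) (max (Metric.infDist x S) (Metric.infDist y S)) :=
        div_max_le_div_max_of_le dist_nonneg (le_max_of_le_left Metric.infDist_nonneg) hxy
    _ ≤ relDist S x z := by
        refine div_max_le_div_max_of_le_max dist_nonneg (max_le ?_ ?_)
        · exact (le_max_left _ _).trans (le_max_right _ _)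
        · exact hz.trans (max_le_max le_rfl (le_max_right _ _))

theorem relDist_le_max (x y z : X) :
    relDist S x y ≤ max (relDist S x z) (relDist S z y) := by
  rcases le_total (dist z y) (dist x z) with h | h
  · exact (relDist_le_of_dist_le S h).trans (le_max_left _ _)
  · calc relDist S x y = relDist S y x := relDist_comm S x y
      _ ≤ relDist S y z := relDist_le_of_dist_le S (by rwa [dist_comm z x, dist_comm y z])
      _ ≤ _ := relDist_comm S y z ▸ le_max_right _ _

end relDist

theorem deltaDist_is_ultrametric_general {K : Type*} [MetricSpace K] [IsUltrametricDist K]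
    {n : ℕ} :
    (∀ x ∈ distinctTuples K n, ∀ y ∈ distinctTuples K n,
      (deltaDist x y = 0 ↔ x = y)) ∧
    (∀ x ∈ distinctTuples K n, ∀ y ∈ distinctTuples K n,
      deltaDist x y = deltaDist y x) ∧
    (∀ x ∈ distinctTuples K n, ∀ y ∈ distinctTuples K n, ∀ z ∈ distinctTuples K n,
      deltaDist x y ≤ max (deltaDist x z) (deltaDist z y)) :=
  ⟨fun _ _ _ _ => relDist_eq_zero_iff _, fun x _ y _ => relDist_comm _ x y,
    fun x _ y _ z _ => relDist_le_max _ x y z⟩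

/-- for an ultrametric space `(K, d)` and `n ≥ 2`, `δ` is an ultrametric
on `K̃ⁿ`: it vanishes exactly on the diagonal, is symmetric, and satisfies the strong
triangle inequality. -/
theorem deltaDist_is_ultrametric {K : Type*} [MetricSpace K] [IsUltrametricDist K]
    {n : ℕ} (hn : 2 ≤ n) :
    (∀ x ∈ distinctTuples K n, ∀ y ∈ distinctTuples K n,
      (deltaDist x y = 0 ↔ x = y)) ∧
    (∀ x ∈ distinctTuples K n, ∀ y ∈ distinctTuples K n,
      deltaDist x y = deltaDist y x) ∧
    (∀ x ∈ distinctTuples K n, ∀ y ∈ distinctTuples K n, ∀ z ∈ distinctTuples K n,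
      deltaDist x y ≤ max (deltaDist x z) (deltaDist z y)) :=
  deltaDist_is_ultrametric_general

end NonArch
end

section
/- Let (K, d) be a complete ultrametric space and n ≥ 2. Then the space K̃^n = {x ∈ K^n : x_i ≠ x_j for all i ≠ j}, equipped with the ultrametric δ(x, y) := d^n(x, y) / max( d^n(x, y), d^n(x, (K̃^n)^c), d^n(y, (K̃^n)^c) ), is a complete ultrametric space. -/
namespace NonArch

instance instPiUltra {ι : Type*} [Fintype ι] {X : ι → Type*} [∀ i, PseudoMetricSpace (X i)]
    [∀ i, IsUltrametricDist (X i)] : IsUltrametricDist (∀ i, X i) := by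
  refine ⟨fun x y z => ?_⟩
  rw [dist_pi_le_iff (le_trans dist_nonneg (le_max_left _ _))]
  intro i
  exact (IsUltrametricDist.dist_triangle_max (x i) (y i) (z i)).trans
    (max_le_max (dist_le_pi_dist x y i) (dist_le_pi_dist y z i))

lemma ultra_infDist_le {X : Type*} [MetricSpace X] [IsUltrametricDist X] {s : Set X}
    (hs : s.Nonempty) {x y : X} (h : dist x y < Metric.infDist x s) :
    Metric.infDist x s ≤ Metric.infDist y s := by
  by_contra hlt
  push_neg at hlt
  obtain ⟨z, hz, hdz⟩ := (Metric.infDist_lt_iff hs).mp hlt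
  have h1 : Metric.infDist x s ≤ dist x z := Metric.infDist_le_dist_of_mem hz
  have h2 : dist x z ≤ max (dist x y) (dist y z) := IsUltrametricDist.dist_triangle_max x y z
  exact absurd ((h1.trans h2).trans_lt (max_lt h hdz)) (lt_irrefl _)

lemma ultra_infDist_eq {X : Type*} [MetricSpace X] [IsUltrametricDist X] {s : Set X}
    (hs : s.Nonempty) {x y : X} (h : dist x y < Metric.infDist x s) :
    Metric.infDist y s = Metric.infDist x s := by
  have h1 := ultra_infDist_le hs h
  have h' : dist y x < Metric.infDist y s := by rw [dist_comm]; exact h.trans_le h1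
  exact le_antisymm (ultra_infDist_le hs h') h1

/-- for a complete ultrametric space `(K, d)` and `n ≥ 2`, the space
`(K̃ⁿ, δ)` is complete: every `δ`-Cauchy sequence in `K̃ⁿ` converges with respect to
`δ` to a point of `K̃ⁿ`. -/
theorem deltaDist_complete {K : Type*} [MetricSpace K] [IsUltrametricDist K]
    [CompleteSpace K] {n : ℕ} (hn : 2 ≤ n) :
    ∀ u : ℕ → (Fin n → K), (∀ m, u m ∈ distinctTuples K n) →
      (∀ ε : ℝ, 0 < ε → ∃ N : ℕ, ∀ p q : ℕ, N ≤ p → N ≤ q →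
        deltaDist (u p) (u q) < ε) →
      ∃ L ∈ distinctTuples K n,
        Filter.Tendsto (fun m => deltaDist (u m) L) Filter.atTop (nhds 0) := by
  intro u hu hC
  set s : Set (Fin n → K) := (distinctTuples K n)ᶜ with hs_def
  have hsne : s.Nonempty := by
    refine ⟨fun _ => u 0 ⟨0, by omega⟩, fun hmem => ?_⟩
    exact hmem ⟨0, by omega⟩ ⟨1, by omega⟩ (by simp [Fin.ext_iff]) rfl
  have hclosed : IsClosed s := by
    rw [hs_def, isClosed_compl_iff]
    have : distinctTuples K n =
        ⋂ (i : Fin n), ⋂ (j : Fin n), ⋂ (_ : i ≠ j), {x : Fin n → K | x i ≠ x j} := by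
      ext x; simp [distinctTuples]
    rw [this]
    exact isOpen_iInter_of_finite fun i => isOpen_iInter_of_finite fun j =>
      isOpen_iInter_of_finite fun _ => isOpen_ne_fun (continuous_apply i) (continuous_apply j)
  have hr : ∀ m, 0 < Metric.infDist (u m) s := fun m =>
    (hclosed.notMem_iff_infDist_pos hsne).mp (fun h => h (hu m))
  -- key claim
  have key : ∀ p q : ℕ, deltaDist (u p) (u q) < 1/2 →
      dist (u p) (u q) < (1/2) * Metric.infDist (u p) s ∧
      Metric.infDist (u q) s = Metric.infDist (u p) s := by
    intro p q hpq
    rcases eq_or_lt_of_le (dist_nonneg : (0:ℝ) ≤ dist (u p) (u q)) with h0 | h0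
    · have heq : u p = u q := by rw [← dist_le_zero]; exact le_of_eq h0.symm
      constructor
      · rw [← h0]; linarith [hr p]
      · rw [heq]
    · set D := dist (u p) (u q) with hD_def
      set M := max D (max (Metric.infDist (u p) s) (Metric.infDist (u q) s)) with hM_def
      have hMpos : 0 < M := lt_of_lt_of_le h0 (le_max_left _ _)
      have hδeq : deltaDist (u p) (u q) = D / M := rfl
      have hDM : D < M := by
        by_contra hle
        push_neg at hle
        have hMD : M = D := le_antisymm hle (le_max_left _ _)
        rw [hδeq, hMD, div_self h0.ne'] at hpq
        linarith
      have hM : M = max (Metric.infDist (u p) s) (Metric.infDist (u q) s) := by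
        rcases le_total D (max (Metric.infDist (u p) s) (Metric.infDist (u q) s)) with h | h
        · exact max_eq_right h
        · rw [hM_def, max_eq_left h] at hDM; exact absurd hDM (lt_irrefl _)
      have hhalf : D < (1/2) * M := by
        rw [hδeq, div_lt_iff₀ hMpos] at hpq; linarith
      rcases le_total (Metric.infDist (u p) s) (Metric.infDist (u q) s) with hle | hle
      · have hD2 : D < (1/2) * Metric.infDist (u q) s := by
          rwa [hM, max_eq_right hle] at hhalf
        have hD3 : dist (u q) (u p) < Metric.infDist (u q) s := by
          rw [dist_comm]; rw [hD_def] at hD2; linarith [hr q]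
        have heq := ultra_infDist_eq hsne hD3
        refine ⟨?_, heq.symm⟩
        rw [heq]; exact hD2
      · have hD2 : D < (1/2) * Metric.infDist (u p) s := by
          rwa [hM, max_eq_left hle] at hhalf
        have hD3 : dist (u p) (u q) < Metric.infDist (u p) s := by
          rw [hD_def] at hD2; linarith [hr p]
        exact ⟨hD2, ultra_infDist_eq hsne hD3⟩
  obtain ⟨N, hN⟩ := hC (1/2) (by norm_num)
  set R := Metric.infDist (u N) s with hR_def
  have hRpos : 0 < R := hr N
  have hconst : ∀ p, N ≤ p →
      Metric.infDist (u p) s = R ∧ dist (u N) (u p) < (1/2) * R := by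
    intro p hp
    obtain ⟨h1, h2⟩ := key N p (hN N p le_rfl hp)
    exact ⟨h2, h1⟩
  -- Cauchy in the sup metric
  have hcauchy : CauchySeq u := by
    rw [Metric.cauchySeq_iff]
    intro ε hε
    obtain ⟨N', hN'⟩ := hC (min (1/2) (ε / R)) (lt_min (by norm_num) (by positivity))
    refine ⟨max N N', fun p hp q hq => ?_⟩
    have hδ := hN' p q (le_of_max_le_right hp) (le_of_max_le_right hq)
    have hhalf : deltaDist (u p) (u q) < 1/2 := lt_of_lt_of_le hδ (min_le_left _ _)
    obtain ⟨hd, hre⟩ := key p q hhalf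
    have hrp : Metric.infDist (u p) s = R := (hconst p (le_of_max_le_left hp)).1
    have hdR : dist (u p) (u q) < R := by rw [hrp] at hd; linarith
    have hδeq : deltaDist (u p) (u q) = dist (u p) (u q) / R := by
      show dist (u p) (u q) / max (dist (u p) (u q))
        (max (Metric.infDist (u p) s) (Metric.infDist (u q) s)) = _
      rw [hre, hrp, max_self, max_eq_right hdR.le]
    rw [hδeq] at hδ
    have hlt : dist (u p) (u q) / R < ε / R := lt_of_lt_of_le hδ (min_le_right _ _)
    have := mul_lt_mul_of_pos_right hlt hRpos
    rwa [div_mul_cancel₀ _ hRpos.ne', div_mul_cancel₀ _ hRpos.ne'] at this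
  obtain ⟨L, hL⟩ := cauchySeq_tendsto_of_complete hcauchy
  have hNL : dist (u N) L ≤ (1/2) * R := by
    refine le_of_tendsto (Filter.Tendsto.dist tendsto_const_nhds hL) ?_
    exact Filter.eventually_atTop.mpr ⟨N, fun p hp => le_of_lt (hconst p hp).2⟩
  have hNLlt : dist (u N) L < R := lt_of_le_of_lt hNL (by linarith)
  have hrL : Metric.infDist L s = R := ultra_infDist_eq hsne hNLlt
  have hLmem : L ∈ distinctTuples K n := by
    have hns : L ∉ s := (hclosed.notMem_iff_infDist_pos hsne).mpr (hrL ▸ hRpos)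
    rw [hs_def] at hns
    exact not_not.mp hns
  refine ⟨L, hLmem, ?_⟩
  have hev : ∀ᶠ m in Filter.atTop, deltaDist (u m) L = dist (u m) L / R := by
    filter_upwards [Filter.eventually_ge_atTop N] with m hm
    have hrm := (hconst m hm).1
    have hdm : dist (u m) L < R := by
      have h1 : dist (u m) L ≤ max (dist (u m) (u N)) (dist (u N) L) :=
        IsUltrametricDist.dist_triangle_max _ _ _
      have h2 : dist (u m) (u N) < R := by
        rw [dist_comm]; linarith [(hconst m hm).2]
      exact lt_of_le_of_lt h1 (max_lt h2 hNLlt)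
    show dist (u m) L / max (dist (u m) L)
      (max (Metric.infDist (u m) s) (Metric.infDist L s)) = _
    rw [hrm, hrL, max_self, max_eq_right hdm.le]
  have hd0 : Filter.Tendsto (fun m => dist (u m) L / R) Filter.atTop (nhds 0) := by
    have h1 := tendsto_iff_dist_tendsto_zero.mp hL
    simpa using h1.div_const R
  exact hd0.congr' (hev.mono fun m h => h.symm)

end NonArch
end

section
/- Let (X, R_X, μ) and (Y, R_Y, ν) be K-valued measure spaces, and let R be the ring of subsets of X × Y generated by the rectangles {A × B : A ∈ R_X, B ∈ R_Y}. Then there is a unique finitely additive λ : R → K with λ(A × B) = μ(A) ν(B) for all A ∈ R_X, B ∈ R_Y; λ is a K-valued measure on (X × Y, R); and for all A ∈ R_X and B ∈ R_Y one has ‖A × B‖_λ = ‖A‖_μ · ‖B‖_ν. -/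
/-!
The rectangles form a semiring of sets, and `A ×ˢ B ↦ μ A * ν B` is additive on it: if `A ×ˢ B`
is the disjoint union of rectangles `Aᵢ ×ˢ Bᵢ`, then `∑ ν Bᵢ • 1_{Aᵢ} = ν B • 1_A`, and a finitely
additive `μ` respects every linear relation between indicators of members of `R_X` (evaluate
it on the atoms of the family). A content on a semiring extends uniquely to the ring it
generates, which gives `λ`.

Each set of that ring is a finite disjoint union of rectangles contained in it, so in the
ultrametric case `|λ S|` is bounded by the values on rectangles inside `S`. This yields
`‖A × B‖_λ = ‖A‖_μ ‖B‖_ν`, boundedness (every `S` lies in a rectangle), and also continuity.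
Continuity of a measure upgrades to `‖S‖_μ → 0` along a shrinking family with empty
intersection. Given such a family `𝒮` of subsets of `X × Y`, the sections `S_x` shrink to `∅`
for each `x`, so the sets `E(S)` of points `x` whose section `S_x` still has `‖S_x‖_ν > δ` shrink
to `∅` in `R_X`, and `‖E(S)‖_μ` becomes small. A rectangle `C × D ⊆ S` then either contains some
`x ∉ E(S)`, so that `|ν D| ≤ δ`, or lies over `E(S)`, so that `|μ C|` is small.
-/

open Set ENNReal

namespace NonArch

/-- The ring of subsets generated by a family `B` of subsets. -/
inductive RingGen {Z : Type*} (B : Set (Set Z)) : Set Z → Prop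
  | basic {A : Set Z} : A ∈ B → RingGen B A
  | union {A C : Set Z} : RingGen B A → RingGen B C → RingGen B (A ∪ C)
  | inter {A C : Set Z} : RingGen B A → RingGen B C → RingGen B (A ∩ C)
  | diff {A C : Set Z} : RingGen B A → RingGen B C → RingGen B (A \ C)

/-- The family of measurable rectangles `A × B`, `A ∈ R_X`, `B ∈ R_Y`. -/
def rectangles {X Y : Type*} (RX : Set (Set X)) (RY : Set (Set Y)) :
    Set (Set (X × Y)) :=
  {S | ∃ A ∈ RX, ∃ B ∈ RY, S = A ×ˢ B}

open MeasureTheory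

section RingsOfSets

variable {X K : Type*} {R S : Set (Set X)}

theorem IsMeasure.nonempty [NormedField K] {μ : Set X → K} (hμ : IsMeasure R μ) :
    Nonempty X := by
  by_contra hX
  rw [not_nonempty_iff] at hX
  -- on an empty space the empty family is shrinking with empty intersection `univ`
  obtain ⟨B, hB, -⟩ := hμ.shrink_cont ∅ ⟨empty_subset _, fun A hA => absurd hA (notMem_empty A)⟩
    (by simp [eq_empty_of_isEmpty]) 1 one_pos
  exact notMem_empty B hB

theorem IsCoveringRing.isSetRing [Nonempty X] (hR : IsCoveringRing R) : IsSetRing R where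
  empty_mem := by
    obtain ⟨A, hA, -⟩ := hR.covers (Classical.arbitrary X)
    simpa using hR.diff_mem hA hA
  union_mem := hR.union_mem
  sdiff_mem := hR.diff_mem

theorem IsMeasure.apply_empty [NormedField K] {μ : Set X → K} (hR : IsSetRing R)
    (hμ : IsMeasure R μ) : μ ∅ = 0 := by
  simpa using hμ.additive hR.empty_mem hR.empty_mem (disjoint_empty ∅)

def IsMeasure.addContent [NormedField K] {μ : Set X → K} (hR : IsSetRing R)
    (hμ : IsMeasure R μ) : AddContent K R :=
  hR.addContent_of_union μ (hμ.apply_empty hR) fun hs ht hst => hμ.additive hs ht hst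

theorem IsShrinking.image {Y : Type*} {R' : Set (Set Y)} {f : Set X → Set Y}
    (hS : IsShrinking R S) (hf : Monotone f) (hfR : ∀ A ∈ R, f A ∈ R') :
    IsShrinking R' (f '' S) := by
  refine ⟨?_, ?_⟩
  · rintro _ ⟨A, hA, rfl⟩
    exact hfR A (hS.1 hA)
  · rintro _ ⟨A, hA, rfl⟩ _ ⟨B, hB, rfl⟩
    obtain ⟨C, hC, hCAB⟩ := hS.2 hA hB
    exact ⟨f C, mem_image_of_mem f hC,
      subset_inter (hf (hCAB.trans inter_subset_left)) (hf (hCAB.trans inter_subset_right))⟩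

variable [NormedField K] {μ : Set X → K}

theorem IsMeasure.exists_subset_norm_inter_le (hR : IsSetRing R) (hμ : IsMeasure R μ)
    (hS : IsShrinking R S) (hI : ⋂₀ S = ∅) {A T : Set X} (hA : A ∈ S) (hT : T ∈ R)
    {δ : ℝ} (hδ : 0 < δ) : ∃ E ∈ S, E ⊆ A ∧ ‖μ (E ∩ T)‖ ≤ δ := by
  have hST : IsShrinking R ((· ∩ T) '' S) :=
    hS.image (fun _ _ h => inter_subset_inter_left T h) fun B hB => hR.inter_mem hB hT
  have hIT : ⋂₀ ((· ∩ T) '' S) = ∅ := by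
    refine eq_empty_of_forall_notMem fun x hx => ?_
    have hxS : x ∈ ⋂₀ S := fun B hB => (hx _ (mem_image_of_mem _ hB)).1
    simp [hI] at hxS
  obtain ⟨_, ⟨C, hC, rfl⟩, hCsmall⟩ := hμ.shrink_cont _ hST hIT δ hδ
  obtain ⟨E, hE, hECA⟩ := hS.2 hC hA
  refine ⟨E, hE, hECA.trans inter_subset_right, ?_⟩
  simpa using hCsmall (E ∩ T) (mem_image_of_mem _ hE)
    (inter_subset_inter_left T (hECA.trans inter_subset_left))

theorem IsMeasure.exists_disjoint_norm_gt (hR : IsSetRing R) (hμ : IsMeasure R μ)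
    (hS : IsShrinking R S) (hI : ⋂₀ S = ∅) {B T : Set X} (hB : B ∈ S) (hT : T ∈ R)
    (hTB : T ⊆ B) {ε : ℝ} (hε : 0 < ε) (hTε : ε < ‖μ T‖) :
    ∃ E ∈ S, ∃ V ∈ R, E ∪ V ⊆ B ∧ Disjoint E V ∧ ε / 2 < ‖μ V‖ := by
  obtain ⟨E, hE, hEB, hET⟩ := hμ.exists_subset_norm_inter_le hR hS hI hB hT (half_pos hε)
  have hTsplit : μ T = μ (E ∩ T) + μ (T \ E) := by
    rw [← hμ.additive (hR.inter_mem (hS.1 hE) hT) (hR.sdiff_mem hT (hS.1 hE))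
      (disjoint_sdiff_right.mono_left inter_subset_left), inter_comm, inter_union_sdiff]
  refine ⟨E, hE, T \ E, hR.sdiff_mem hT (hS.1 hE), union_subset hEB (sdiff_subset.trans hTB),
    disjoint_sdiff_right, ?_⟩
  have := norm_add_le (μ (E ∩ T)) (μ (T \ E))
  rw [← hTsplit] at this
  linarith

theorem IsMeasure.exists_mem_forall_norm_le (hR : IsSetRing R) (hμ : IsMeasure R μ)
    (hS : IsShrinking R S) (hI : ⋂₀ S = ∅) {ε : ℝ} (hε : 0 < ε) :
    ∃ B ∈ S, ∀ T ∈ R, T ⊆ B → ‖μ T‖ ≤ ε := by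
  by_contra! hlarge
  have hsplit : ∀ B ∈ S, ∃ E ∈ S, ∃ V ∈ R, E ∪ V ⊆ B ∧ Disjoint E V ∧ ε / 2 < ‖μ V‖ :=
    fun B hB => let ⟨_, hT, hTB, hTε⟩ := hlarge B hB
      hμ.exists_disjoint_norm_gt hR hS hI hB hT hTB hε hTε
  choose! E hES V hVR hEVB hEV hVlarge using hsplit
  -- The sets `E B` and `E B ∪ V B` form a shrinking family with empty intersection, so late
  -- members all have measure `≤ ε / 4`; but `μ (V B)` is the difference of two of them.
  set F := ((fun B => E B ∪ V B) '' S) ∪ E '' S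
  have hF : ∀ M ∈ F, ∃ B ∈ S, E B ⊆ M ∧ M ∈ R := by
    rintro M (⟨B, hB, rfl⟩ | ⟨B, hB, rfl⟩)
    · exact ⟨B, hB, subset_union_left, hR.union_mem (hS.1 (hES B hB)) (hVR B hB)⟩
    · exact ⟨B, hB, subset_rfl, hS.1 (hES B hB)⟩
  have hFS : IsShrinking R F := by
    refine ⟨fun M hM => (hF M hM).choose_spec.2.2, fun M₁ hM₁ M₂ hM₂ => ?_⟩
    obtain ⟨B₁, hB₁, hEM₁, -⟩ := hF M₁ hM₁
    obtain ⟨B₂, hB₂, hEM₂, -⟩ := hF M₂ hM₂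
    obtain ⟨C, hC, hCsub⟩ := hS.2 (hES B₁ hB₁) (hES B₂ hB₂)
    exact ⟨E C, Or.inr (mem_image_of_mem E hC),
      (subset_union_left.trans (hEVB C hC)).trans (hCsub.trans (inter_subset_inter hEM₁ hEM₂))⟩
  have hFI : ⋂₀ F = ∅ := by
    refine eq_empty_of_forall_notMem fun x hx => ?_
    have hxS : x ∈ ⋂₀ S := fun B hB =>
      hEVB B hB (hx _ (Or.inl (mem_image_of_mem (fun B => E B ∪ V B) hB)))
    simp [hI] at hxS
  obtain ⟨M, hM, hMsmall⟩ := hμ.shrink_cont F hFS hFI (ε / 4) (by positivity)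
  obtain ⟨B, hB, hEM, -⟩ := hF M hM
  set C := E B
  have hC : C ∈ S := hES B hB
  have hCM : E C ∪ V C ⊆ M := (hEVB C hC).trans hEM
  have h₁ := hMsmall _ (Or.inl (mem_image_of_mem _ hC)) hCM
  have h₂ := hMsmall _ (Or.inr (mem_image_of_mem _ hC)) (subset_union_left.trans hCM)
  have hVC : μ (V C) = μ (E C ∪ V C) - μ (E C) := by
    rw [hμ.additive (hS.1 (hES C hC)) (hVR C hC) (hEV C hC)]
    ring
  have := norm_sub_le (μ (E C ∪ V C)) (μ (E C))
  rw [← hVC] at this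
  rw [abs_norm] at h₁ h₂
  linarith [hVlarge C hC]

end RingsOfSets

section Signature

variable {X K : Type*} {R : Set (Set X)} {ι : Type*} [Fintype ι] {A : ι → Set X}

open Classical in
/-- The fibres of `signature A` are the atoms of the family `A`. -/
noncomputable def signature (A : ι → Set X) (x : X) : Finset ι := {i | x ∈ A i}

theorem mem_signature {x : X} {i : ι} : i ∈ signature A x ↔ x ∈ A i := by
  simp [signature]

theorem signature_preimage_singleton_mem (hR : IsSetRing R) (hA : ∀ i, A i ∈ R)
    {s : Finset ι} (hs : s.Nonempty) : signature A ⁻¹' {s} ∈ R := by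
  classical
  have : signature A ⁻¹' {s} = (⋂ i ∈ s, A i) \ ⋃ i ∈ sᶜ, A i := by
    ext x
    simp only [mem_preimage, mem_singleton_iff, Finset.ext_iff, mem_signature, mem_sdiff,
      mem_iInter, mem_iUnion, Finset.mem_compl, not_exists]
    exact ⟨fun h => ⟨fun i hi => (h i).2 hi, fun i hi hxi => hi ((h i).1 hxi)⟩,
      fun h i => ⟨fun hxi => by_contra fun hi => h.2 i hi hxi, h.1 i⟩⟩
  rw [this]
  exact hR.sdiff_mem (hR.biInter_mem s hs fun i _ => hA i) (hR.biUnion_mem _ fun i _ => hA i)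

theorem signature_preimage_eq_biUnion (T : Finset (Finset ι)) :
    signature A ⁻¹' T = ⋃ s ∈ T, signature A ⁻¹' {s} := by
  ext x
  simp

theorem signature_preimage_mem (hR : IsSetRing R) (hA : ∀ i, A i ∈ R)
    {T : Finset (Finset ι)} (hT : ∅ ∉ T) : signature A ⁻¹' T ∈ R := by
  rw [signature_preimage_eq_biUnion]
  exact hR.biUnion_mem T fun s hs => signature_preimage_singleton_mem hR hA
    (Finset.nonempty_iff_ne_empty.2 (ne_of_mem_of_not_mem hs hT))

theorem addContent_signature_preimage {G : Type*} [AddCommMonoid G] (m : AddContent G R)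
    (hR : IsSetRing R) (hA : ∀ i, A i ∈ R) {T : Finset (Finset ι)} (hT : ∅ ∉ T) :
    m (signature A ⁻¹' T) = ∑ s ∈ T, m (signature A ⁻¹' {s}) := by
  rw [signature_preimage_eq_biUnion]
  refine addContent_biUnion (fun s hs => signature_preimage_singleton_mem hR hA
    (Finset.nonempty_iff_ne_empty.2 (ne_of_mem_of_not_mem hs hT))) ?_ ?_
  · intro s _ t _ hst
    exact disjoint_singleton.2 hst |>.preimage _
  · rw [← signature_preimage_eq_biUnion]
    exact signature_preimage_mem hR hA hT

theorem sum_mul_addContent_eq_zero [Semiring K] (m : AddContent K R) (hR : IsSetRing R)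
    (hA : ∀ i, A i ∈ R) (c : ι → K) (h : ∑ i, (A i).indicator (fun _ => c i) = 0) :
    ∑ i, c i * m (A i) = 0 := by
  classical
  have hAi : ∀ i, A i = signature A ⁻¹' ↑({s | i ∈ s} : Finset (Finset ι)) := fun i => by
    ext x
    simp [mem_signature]
  calc ∑ i, c i * m (A i)
      = ∑ i, ∑ s with i ∈ s, c i * m (signature A ⁻¹' {s}) := by
        refine Finset.sum_congr rfl fun i _ => ?_
        rw [hAi i, addContent_signature_preimage m hR hA (by simp), Finset.mul_sum]
    _ = ∑ s, (∑ i ∈ s, c i) * m (signature A ⁻¹' {s}) := by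
        simp_rw [Finset.sum_filter, Finset.sum_mul]
        rw [Finset.sum_comm]
        simp [Finset.sum_ite_mem]
    _ = 0 := by
        refine Finset.sum_eq_zero fun s _ => ?_
        obtain hempty | ⟨x, rfl⟩ := (signature A ⁻¹' {s}).eq_empty_or_nonempty
        · rw [hempty, addContent_empty, mul_zero]
        · have hx := congrFun h x
          simp only [Finset.sum_apply, indicator_apply, Pi.zero_apply] at hx
          rw [← Finset.sum_filter] at hx
          rw [signature, Finset.filter_congr_decidable, hx, zero_mul]

end Signature

section SupClosure

variable {Z G : Type*} {C : Set (Set Z)}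

theorem ringGen_iff_mem_supClosure (hC : IsSetSemiring C) {S : Set Z} :
    RingGen C S ↔ S ∈ supClosure C := by
  refine ⟨fun hS => ?_, fun hS => supClosure_min (t := {S | RingGen C S})
    (fun S hS => RingGen.basic hS) (fun S hS T hT => RingGen.union hS hT) hS⟩
  induction hS with
  | basic h => exact subset_supClosure h
  | union _ _ h₁ h₂ => exact hC.isSetRing_supClosure.union_mem h₁ h₂
  | inter _ _ h₁ h₂ => exact hC.isSetRing_supClosure.inter_mem h₁ h₂
  | diff _ _ h₁ h₂ => exact hC.isSetRing_supClosure.sdiff_mem h₁ h₂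

theorem addContent_eq_sum_parts [AddCommMonoid G] (hC : IsSetSemiring C)
    (m : AddContent G (supClosure C)) {s : Set Z} (P : Finpartition s) (hP : ↑P.parts ⊆ C) :
    m s = ∑ u ∈ P.parts, m u := by
  have hs : ⋃₀ ↑P.parts = s := by
    nth_rewrite 2 [← P.sup_parts]
    rw [Finset.sup_set_eq_biUnion, sUnion_eq_biUnion]
    simp
  refine (congrArg m hs.symm).trans (addContent_sUnion (hP.trans subset_supClosure) P.disjoint ?_)
  rw [hs]
  exact hC.mem_supClosure_iff.2 ⟨P, hP⟩

theorem eq_addContent_of_union_eq_add [AddCancelCommMonoid G] (hC : IsSetSemiring C)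
    (m : AddContent G (supClosure C)) {f : Set Z → G} (hf : ∀ u ∈ C, f u = m u)
    (hadd : ∀ ⦃s⦄, s ∈ supClosure C → ∀ ⦃t⦄, t ∈ supClosure C → Disjoint s t →
      f (s ∪ t) = f s + f t)
    {s : Set Z} (hs : s ∈ supClosure C) : f s = m s := by
  have h₀ : f ∅ = 0 := by
    have hempty := subset_supClosure hC.empty_mem
    simpa using hadd hempty hempty (disjoint_empty ∅)
  let m' := hC.isSetRing_supClosure.addContent_of_union f h₀ fun hs ht hst => hadd hs ht hst
  obtain ⟨P, hP⟩ := hC.mem_supClosure_iff.1 hs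
  rw [show f s = m' s from rfl, addContent_eq_sum_parts hC m' P hP,
    addContent_eq_sum_parts hC m P hP]
  exact Finset.sum_congr rfl fun u hu => hf u (hP hu)

theorem norm_addContent_le_of_forall_subset [SeminormedAddCommGroup G] [IsUltrametricDist G]
    (hC : IsSetSemiring C) (m : AddContent G (supClosure C)) {s : Set Z}
    (hs : s ∈ supClosure C) {r : ℝ} (hr : 0 ≤ r) (h : ∀ u ∈ C, u ⊆ s → ‖m u‖ ≤ r) :
    ‖m s‖ ≤ r := by
  obtain ⟨P, hP⟩ := hC.mem_supClosure_iff.1 hs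
  rw [addContent_eq_sum_parts hC m P hP]
  exact IsUltrametricDist.norm_sum_le_of_forall_le_of_nonneg hr fun u hu => h u (hP hu) (P.le hu)

end SupClosure

section MNorm

variable {X K : Type*} [NormedField K] {R : Set (Set X)} {μ : Set X → K} {A A' B : Set X}

theorem le_mnorm (hB : B ∈ R) (hBA : B ⊆ A) : (‖μ B‖₊ : ℝ≥0∞) ≤ mnorm R μ A :=
  le_iSup₂_of_le (f := fun B (_ : B ∈ R ∧ B ⊆ A) => (‖μ B‖₊ : ℝ≥0∞)) B ⟨hB, hBA⟩ le_rfl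

theorem mnorm_le_iff {c : ℝ≥0∞} : mnorm R μ A ≤ c ↔ ∀ B ∈ R, B ⊆ A → (‖μ B‖₊ : ℝ≥0∞) ≤ c := by
  simp [mnorm, and_imp]

theorem mnorm_mono (h : A ⊆ A') : mnorm R μ A ≤ mnorm R μ A' :=
  mnorm_le_iff.2 fun _ hB hBA => le_mnorm hB (hBA.trans h)

theorem norm_le_toReal_mnorm (hA : mnorm R μ A ≠ ⊤) (hB : B ∈ R) (hBA : B ⊆ A) :
    ‖μ B‖ ≤ (mnorm R μ A).toReal := by
  simpa using ENNReal.toReal_mono hA (le_mnorm hB hBA)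

theorem mnorm_supClosure [IsUltrametricDist K] {C : Set (Set X)} (hC : IsSetSemiring C)
    (m : AddContent K (supClosure C)) (A : Set X) :
    mnorm (supClosure C) m A = mnorm C m A := by
  refine le_antisymm (mnorm_le_iff.2 fun B hB hBA => ?_)
    (mnorm_le_iff.2 fun B hB hBA => le_mnorm (subset_supClosure hB) hBA)
  obtain htop | hfin := eq_or_ne (mnorm C m A) ⊤
  · exact htop ▸ le_top
  calc (‖m B‖₊ : ℝ≥0∞) = ENNReal.ofReal ‖m B‖ := (ofReal_norm _).symm
    _ ≤ mnorm C m A := ENNReal.ofReal_le_of_le_toReal <|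
      norm_addContent_le_of_forall_subset hC m hB ENNReal.toReal_nonneg
        fun u hu huB => norm_le_toReal_mnorm hfin hu (huB.trans hBA)

end MNorm

section Rectangles

variable {X Y K : Type*} {RX : Set (Set X)} {RY : Set (Set Y)}

theorem isSetSemiring_rectangles (hRX : IsSetRing RX) (hRY : IsSetRing RY) :
    IsSetSemiring (rectangles RX RY) where
  empty_mem := ⟨∅, hRX.empty_mem, ∅, hRY.empty_mem, (empty_prod).symm⟩
  inter_mem := by
    rintro _ ⟨A, hA, B, hB, rfl⟩ _ ⟨A', hA', B', hB', rfl⟩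
    exact ⟨A ∩ A', hRX.inter_mem hA hA', B ∩ B', hRY.inter_mem hB hB', prod_inter_prod⟩
  sdiff_eq_sUnion' := by
    classical
    rintro _ ⟨A, hA, B, hB, rfl⟩ _ ⟨A', hA', B', hB', rfl⟩
    refine ⟨{(A \ A') ×ˢ B, (A ∩ A') ×ˢ (B \ B')}, ?_, ?_, ?_⟩
    · simp only [Finset.coe_insert, Finset.coe_singleton, insert_subset_iff,
        singleton_subset_iff]
      exact ⟨⟨_, hRX.sdiff_mem hA hA', _, hB, rfl⟩,
        ⟨_, hRX.inter_mem hA hA', _, hRY.sdiff_mem hB hB', rfl⟩⟩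
    · simp only [Finset.coe_insert, Finset.coe_singleton]
      have h : Disjoint ((A \ A') ×ˢ B) ((A ∩ A') ×ˢ (B \ B')) :=
        disjoint_prod.2 (Or.inl (disjoint_sdiff_left.mono_right inter_subset_right))
      exact pairwise_pair.2 fun _ => ⟨h, h.symm⟩
    · ext ⟨x, y⟩
      simp only [Finset.coe_insert, Finset.coe_singleton, sUnion_insert, sUnion_singleton,
        mem_sdiff, mem_prod, mem_union, mem_inter_iff]
      tauto

theorem mk_preimage_prod_mem (hRY : IsSetRing RY) (A : Set X) {B : Set Y} (hB : B ∈ RY)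
    (x : X) : Prod.mk x ⁻¹' (A ×ˢ B) ∈ RY := by
  classical
  rw [mk_preimage_prod_right_eq_if]
  split_ifs
  exacts [hB, hRY.empty_mem]

theorem addContent_mk_preimage_prod {G : Type*} [AddCommMonoid G] (ν : AddContent G RY)
    (A : Set X) (B : Set Y) (x : X) :
    ν (Prod.mk x ⁻¹' (A ×ˢ B)) = A.indicator (fun _ => ν B) x := by
  classical
  rw [mk_preimage_prod_right_eq_if, indicator_apply]
  split_ifs <;> simp

variable [CommRing K]

theorem addContent_fst_image_mul_snd_image (μ : AddContent K RX) (ν : AddContent K RY)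
    (A : Set X) (B : Set Y) :
    μ (Prod.fst '' A ×ˢ B) * ν (Prod.snd '' A ×ˢ B) = μ A * ν B := by
  obtain rfl | hA := A.eq_empty_or_nonempty
  · simp
  obtain rfl | hB := B.eq_empty_or_nonempty
  · simp
  rw [fst_image_prod A hB, snd_image_prod hA B]

theorem sum_mul_eq_of_sUnion_eq_prod (hRX : IsSetRing RX) (hRY : IsSetRing RY)
    (μ : AddContent K RX) (ν : AddContent K RY) {I : Finset (Set (X × Y))}
    (hI : ↑I ⊆ rectangles RX RY) (hdisj : PairwiseDisjoint (I : Set (Set (X × Y))) id)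
    {A : Set X} {B : Set Y} (hA : A ∈ RX) (hB : B ∈ RY) (hAB : ⋃₀ ↑I = A ×ˢ B) :
    ∑ u ∈ I, μ (Prod.fst '' u) * ν (Prod.snd '' u) = μ A * ν B := by
  have hI' : ∀ u ∈ I, ∃ A ∈ RX, ∃ B ∈ RY, u = A ×ˢ B := fun u hu => hI hu
  choose! a ha b hb hab using hI'
  have hsections : ∀ x, ∑ u ∈ I, (a u).indicator (fun _ => ν (b u)) x
      = A.indicator (fun _ => ν B) x := by
    intro x
    have hunion : ⋃ u ∈ I, Prod.mk x ⁻¹' u = Prod.mk x ⁻¹' (A ×ˢ B) := by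
      rw [← hAB, sUnion_eq_biUnion, preimage_iUnion₂, Finset.set_biUnion_coe]
    rw [← addContent_mk_preimage_prod, ← hunion, addContent_biUnion]
    · refine Finset.sum_congr rfl fun u hu => ?_
      rw [← addContent_mk_preimage_prod, ← hab u hu]
    · exact fun u hu => hab u hu ▸ mk_preimage_prod_mem hRY _ (hb u hu) x
    · exact fun u hu v hv huv => (hdisj hu hv huv).preimage _
    · exact hunion ▸ mk_preimage_prod_mem hRY A hB x
  have hindicator : ∑ o : Option I,
      (o.elim A fun u => a u).indicator (fun _ => o.elim (-ν B) fun u => ν (b u)) = 0 := by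
    ext x
    simp only [Finset.sum_apply, Fintype.sum_option, Option.elim_none, Option.elim_some,
      Finset.sum_coe_sort I (fun u => (a u).indicator (fun _ => ν (b u)) x), hsections x,
      Pi.zero_apply]
    by_cases hx : x ∈ A <;> simp [hx]
  have hzero := sum_mul_addContent_eq_zero μ hRX (Option.rec hA fun u => ha u u.2) _ hindicator
  simp only [Fintype.sum_option, Option.elim_none, Option.elim_some,
    Finset.sum_coe_sort I (fun u => ν (b u) * μ (a u))] at hzero
  calc ∑ u ∈ I, μ (Prod.fst '' u) * ν (Prod.snd '' u) = ∑ u ∈ I, ν (b u) * μ (a u) := by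
        refine Finset.sum_congr rfl fun u hu => ?_
        rw [mul_comm (ν (b u)), ← addContent_fst_image_mul_snd_image μ ν (a u), ← hab u hu]
    _ = μ A * ν B := by linear_combination hzero

/-- A rectangle is the product of its projections, so `A ×ˢ B ↦ μ A * ν B` needs no choice. -/
def prodContent (hRX : IsSetRing RX) (hRY : IsSetRing RY) (μ : AddContent K RX)
    (ν : AddContent K RY) : AddContent K (rectangles RX RY) where
  toFun u := μ (Prod.fst '' u) * ν (Prod.snd '' u)
  empty' := by simp
  sUnion' I hI hdisj := by
    rintro ⟨A, hA, B, hB, hAB⟩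
    rw [hAB, addContent_fst_image_mul_snd_image]
    exact (sum_mul_eq_of_sUnion_eq_prod hRX hRY μ ν hI hdisj hA hB hAB).symm

theorem prodContent_prod (hRX : IsSetRing RX) (hRY : IsSetRing RY) (μ : AddContent K RX)
    (ν : AddContent K RY) (A : Set X) (B : Set Y) :
    prodContent hRX hRY μ ν (A ×ˢ B) = μ A * ν B :=
  addContent_fst_image_mul_snd_image μ ν A B

end Rectangles

section ProductRing

variable {X Y : Type*} {RX : Set (Set X)} {RY : Set (Set Y)} {S : Set (X × Y)}

theorem exists_finset_eq_biUnion_prod (hS : S ∈ supClosure (rectangles RX RY)) :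
    ∃ F : Finset (Set X × Set Y), (∀ p ∈ F, p.1 ∈ RX ∧ p.2 ∈ RY) ∧
      S = ⋃ p ∈ F, p.1 ×ˢ p.2 := by
  classical
  refine supClosure_min (t := {S | ∃ F : Finset (Set X × Set Y), (∀ p ∈ F, p.1 ∈ RX ∧ p.2 ∈ RY) ∧
    S = ⋃ p ∈ F, p.1 ×ˢ p.2}) (fun S hS => ?_) (fun S hS T hT => ?_) hS
  · obtain ⟨A, hA, B, hB, rfl⟩ := hS
    exact ⟨{(A, B)}, by simpa using ⟨hA, hB⟩, by simp⟩
  · obtain ⟨F, hF, rfl⟩ := hS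
    obtain ⟨G, hG, rfl⟩ := hT
    refine ⟨F ∪ G, fun p hp => (Finset.mem_union.1 hp).elim (hF p) (hG p), ?_⟩
    rw [Finset.set_biUnion_union]
    rfl

theorem exists_subset_prod_of_mem_supClosure (hRX : IsSetRing RX) (hRY : IsSetRing RY)
    (hS : S ∈ supClosure (rectangles RX RY)) : ∃ P ∈ RX, ∃ Q ∈ RY, S ⊆ P ×ˢ Q := by
  refine supClosure_min (t := {S | ∃ P ∈ RX, ∃ Q ∈ RY, S ⊆ P ×ˢ Q}) (fun S hS => ?_)
    (fun S hS T hT => ?_) hS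
  · obtain ⟨A, hA, B, hB, rfl⟩ := hS
    exact ⟨A, hA, B, hB, subset_rfl⟩
  · obtain ⟨P, hP, Q, hQ, hS⟩ := hS
    obtain ⟨P', hP', Q', hQ', hT⟩ := hT
    exact ⟨P ∪ P', hRX.union_mem hP hP', Q ∪ Q', hRY.union_mem hQ hQ',
      union_subset (hS.trans (prod_mono subset_union_left subset_union_left))
        (hT.trans (prod_mono subset_union_right subset_union_right))⟩

theorem mk_preimage_mem_of_mem_supClosure (hRY : IsSetRing RY)
    (hS : S ∈ supClosure (rectangles RX RY)) (x : X) : Prod.mk x ⁻¹' S ∈ RY := by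
  refine supClosure_min (t := {S | Prod.mk x ⁻¹' S ∈ RY}) (fun S hS => ?_) (fun S hS T hT => ?_) hS
  · obtain ⟨A, -, B, hB, rfl⟩ := hS
    exact mk_preimage_prod_mem hRY A hB x
  · exact hRY.union_mem hS hT

theorem setOf_mk_preimage_mem (hRX : IsSetRing RX) (hS : S ∈ supClosure (rectangles RX RY))
    {Φ : Set Y → Prop} (hΦ : ¬Φ ∅) : {x | Φ (Prod.mk x ⁻¹' S)} ∈ RX := by
  classical
  obtain ⟨F, hF, rfl⟩ := exists_finset_eq_biUnion_prod hS
  -- the section at `x` only depends on which of the sets `p.1` contain `x`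
  have hsection : ∀ x, Prod.mk x ⁻¹' (⋃ p ∈ F, p.1 ×ˢ p.2)
      = ⋃ p ∈ signature (fun p : F => p.1.1) x, p.1.2 := by
    intro x
    ext y
    simp [mem_signature]
  have : {x | Φ (Prod.mk x ⁻¹' (⋃ p ∈ F, p.1 ×ˢ p.2))}
      = signature (fun p : F => p.1.1) ⁻¹' ↑({s | Φ (⋃ p ∈ s, p.1.2)} : Finset (Finset F)) := by
    ext x
    simp [hsection]
  rw [this]
  exact signature_preimage_mem hRX (fun p : F => (hF p.1 p.2).1) (by simpa using hΦ)

end ProductRing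

section ProductMeasure

variable {X Y K : Type*} [NormedField K] {RX : Set (Set X)} {RY : Set (Set Y)}
  {μ : Set X → K} {ν : Set Y → K}

theorem mnorm_rectangles_prod (m : AddContent K (supClosure (rectangles RX RY)))
    (hm : ∀ A ∈ RX, ∀ B ∈ RY, m (A ×ˢ B) = μ A * ν B) (A : Set X) (B : Set Y) :
    mnorm (rectangles RX RY) m (A ×ˢ B) = mnorm RX μ A * mnorm RY ν B := by
  refine le_antisymm (mnorm_le_iff.2 ?_) ?_
  · rintro _ ⟨C, hC, D, hD, rfl⟩ hCD
    obtain ⟨hCA, hDB⟩ | rfl | rfl := prod_subset_prod_iff.1 hCD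
    · rw [hm C hC D hD, nnnorm_mul, ENNReal.coe_mul]
      exact mul_le_mul' (le_mnorm hC hCA) (le_mnorm hD hDB)
    all_goals simp
  · simp only [mnorm, ENNReal.iSup_mul, ENNReal.mul_iSup, iSup_le_iff, and_imp]
    intro D hD hDB C hC hCA
    rw [← ENNReal.coe_mul, ← nnnorm_mul, ← hm C hC D hD]
    exact le_mnorm ⟨C, hC, D, hD, rfl⟩ (prod_mono hCA hDB)

variable [IsUltrametricDist K]

theorem mnorm_supClosure_rectangles_prod (hRX : IsSetRing RX) (hRY : IsSetRing RY)
    (m : AddContent K (supClosure (rectangles RX RY)))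
    (hm : ∀ A ∈ RX, ∀ B ∈ RY, m (A ×ˢ B) = μ A * ν B) (A : Set X) (B : Set Y) :
    mnorm (supClosure (rectangles RX RY)) m (A ×ˢ B) = mnorm RX μ A * mnorm RY ν B := by
  rw [mnorm_supClosure (isSetSemiring_rectangles hRX hRY), mnorm_rectangles_prod m hm]

theorem mnorm_lt_top_of_mem_supClosure (hRX : IsSetRing RX) (hRY : IsSetRing RY)
    (hμ : IsMeasure RX μ) (hν : IsMeasure RY ν) (m : AddContent K (supClosure (rectangles RX RY)))
    (hm : ∀ A ∈ RX, ∀ B ∈ RY, m (A ×ˢ B) = μ A * ν B) {S : Set (X × Y)}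
    (hS : S ∈ supClosure (rectangles RX RY)) :
    mnorm (supClosure (rectangles RX RY)) m S < ⊤ := by
  obtain ⟨P, hP, Q, hQ, hSPQ⟩ := exists_subset_prod_of_mem_supClosure hRX hRY hS
  calc mnorm (supClosure (rectangles RX RY)) m S
      ≤ mnorm (supClosure (rectangles RX RY)) m (P ×ˢ Q) := mnorm_mono hSPQ
    _ = mnorm RX μ P * mnorm RY ν Q := mnorm_supClosure_rectangles_prod hRX hRY m hm P Q
    _ < ⊤ := ENNReal.mul_lt_top (hμ.bounded hP) (hν.bounded hQ)

end ProductMeasure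

section Continuity

variable {X Y K : Type*} [NormedField K] {RX : Set (Set X)} {RY : Set (Set Y)}
  {μ : Set X → K} {ν : Set Y → K} {δ : ℝ}

def largeSections (RY : Set (Set Y)) (ν : Set Y → K) (δ : ℝ) (S : Set (X × Y)) : Set X :=
  {x | ∃ T ∈ RY, T ⊆ Prod.mk x ⁻¹' S ∧ δ < ‖ν T‖}

theorem largeSections_mono : Monotone (largeSections (X := X) RY ν δ) :=
  fun _ _ h _ ⟨T, hT, hTS, hδT⟩ => ⟨T, hT, hTS.trans (preimage_mono h), hδT⟩

theorem largeSections_mem (hRX : IsSetRing RX) (hν : ν ∅ = 0) (hδ : 0 ≤ δ) {S : Set (X × Y)}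
    (hS : S ∈ supClosure (rectangles RX RY)) : largeSections RY ν δ S ∈ RX :=
  setOf_mk_preimage_mem (Φ := fun Q => ∃ T ∈ RY, T ⊆ Q ∧ δ < ‖ν T‖) hRX hS
    fun ⟨T, _, hT, hδT⟩ => by
    rw [subset_empty_iff.1 hT, hν, norm_zero] at hδT
    exact hδT.not_ge hδ

theorem sInter_image_largeSections (hRY : IsSetRing RY) (hν : IsMeasure RY ν)
    {𝒮 : Set (Set (X × Y))} (h𝒮 : IsShrinking (supClosure (rectangles RX RY)) 𝒮)
    (hI : ⋂₀ 𝒮 = ∅) (hδ : 0 < δ) : ⋂₀ (largeSections RY ν δ '' 𝒮) = ∅ := by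
  refine eq_empty_of_forall_notMem fun x hx => ?_
  have hsec : IsShrinking RY ((Prod.mk x ⁻¹' ·) '' 𝒮) :=
    h𝒮.image (fun _ _ h => preimage_mono h) fun S hS => mk_preimage_mem_of_mem_supClosure hRY hS x
  have hsecI : ⋂₀ ((Prod.mk x ⁻¹' ·) '' 𝒮) = ∅ := by
    rw [sInter_image, ← preimage_iInter₂, ← sInter_eq_biInter, hI, preimage_empty]
  obtain ⟨_, ⟨S, hS, rfl⟩, hsmall⟩ := hν.exists_mem_forall_norm_le hRY hsec hsecI hδ
  obtain ⟨T, hT, hTS, hδT⟩ := hx _ (mem_image_of_mem _ hS)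
  exact (hsmall T hT hTS).not_gt hδT

theorem norm_mul_le_of_prod_subset {S : Set (X × Y)} {P : Set X} {Q : Set Y}
    (hSPQ : S ⊆ P ×ˢ Q) {M N δ' : ℝ} (hM : ∀ C ∈ RX, C ⊆ P → ‖μ C‖ ≤ M)
    (hN : ∀ D ∈ RY, D ⊆ Q → ‖ν D‖ ≤ N)
    (hlarge : ∀ C ∈ RX, C ⊆ largeSections RY ν δ S → ‖μ C‖ ≤ δ')
    {C : Set X} {D : Set Y} (hC : C ∈ RX) (hD : D ∈ RY) (hCD : C ×ˢ D ⊆ S)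
    (hne : (C ×ˢ D).Nonempty) : ‖μ C * ν D‖ ≤ max (M * δ) (δ' * N) := by
  obtain ⟨hCP, hDQ⟩ := (prod_subset_prod_iff.1 (hCD.trans hSPQ)).resolve_right <| by
    rintro (rfl | rfl) <;> simp at hne
  rw [norm_mul]
  by_cases hgood : ∃ x ∈ C, x ∉ largeSections RY ν δ S
  · obtain ⟨x, hxC, hx⟩ := hgood
    have hνD : ‖ν D‖ ≤ δ := not_lt.1 fun hδD => hx ⟨D, hD, fun y hy => hCD ⟨hxC, hy⟩, hδD⟩
    have hμC := hM C hC hCP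
    exact le_max_of_le_left (mul_le_mul hμC hνD (norm_nonneg _) ((norm_nonneg _).trans hμC))
  · push Not at hgood
    have hμC := hlarge C hC hgood
    exact le_max_of_le_right
      (mul_le_mul hμC (hN D hD hDQ) (norm_nonneg _) ((norm_nonneg _).trans hμC))

variable [IsUltrametricDist K]

theorem tendstoZeroOn_of_isShrinking (hRX : IsSetRing RX) (hRY : IsSetRing RY)
    (hμ : IsMeasure RX μ) (hν : IsMeasure RY ν) (m : AddContent K (supClosure (rectangles RX RY)))
    (hm : ∀ A ∈ RX, ∀ B ∈ RY, m (A ×ˢ B) = μ A * ν B) {𝒮 : Set (Set (X × Y))}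
    (h𝒮 : IsShrinking (supClosure (rectangles RX RY)) 𝒮) (hI : ⋂₀ 𝒮 = ∅) :
    TendstoZeroOn 𝒮 fun S => ‖m S‖ := by
  intro ε hε
  have := hμ.nonempty
  have := hν.nonempty
  obtain ⟨S₀, hS₀⟩ : 𝒮.Nonempty := nonempty_iff_ne_empty.2 fun h => by simp [h] at hI
  obtain ⟨P, hP, Q, hQ, hS₀PQ⟩ := exists_subset_prod_of_mem_supClosure hRX hRY (h𝒮.1 hS₀)
  obtain ⟨δ, hδ, hMδ⟩ := exists_pos_mul_lt hε (mnorm RX μ P).toReal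
  obtain ⟨δ', hδ', hNδ'⟩ := exists_pos_mul_lt hε (mnorm RY ν Q).toReal
  have hlarge : IsShrinking RX (largeSections RY ν δ '' 𝒮) := h𝒮.image largeSections_mono
    fun S hS => largeSections_mem hRX (hν.apply_empty hRY) hδ.le hS
  obtain ⟨_, ⟨S₁, hS₁, rfl⟩, hS₁small⟩ := hμ.exists_mem_forall_norm_le hRX hlarge
    (sInter_image_largeSections hRY hν h𝒮 hI hδ) hδ'
  obtain ⟨B, hB, hBsub⟩ := h𝒮.2 hS₀ hS₁
  refine ⟨B, hB, fun S hS hSB => ?_⟩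
  rw [abs_norm]
  refine norm_addContent_le_of_forall_subset (isSetSemiring_rectangles hRX hRY) m (h𝒮.1 hS)
    hε.le ?_
  rintro _ ⟨C, hC, D, hD, rfl⟩ hCD
  obtain hempty | hne := (C ×ˢ D).eq_empty_or_nonempty
  · simp [hempty, hε.le]
  rw [hm C hC D hD]
  have hSS₀ : S ⊆ S₀ := hSB.trans (hBsub.trans inter_subset_left)
  have hSS₁ : S ⊆ S₁ := hSB.trans (hBsub.trans inter_subset_right)
  refine (norm_mul_le_of_prod_subset (hSS₀.trans hS₀PQ)
    (fun C hC hCP => norm_le_toReal_mnorm (hμ.bounded hP).ne hC hCP)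
    (fun D hD hDQ => norm_le_toReal_mnorm (hν.bounded hQ).ne hD hDQ)
    (fun C hC h => hS₁small C hC (h.trans (largeSections_mono hSS₁))) hC hD hCD hne).trans
    (max_le hMδ.le ?_)
  rw [mul_comm]
  exact hNδ'.le

theorem isMeasure_supClosure_rectangles (hRX : IsSetRing RX) (hRY : IsSetRing RY)
    (hμ : IsMeasure RX μ) (hν : IsMeasure RY ν) (m : AddContent K (supClosure (rectangles RX RY)))
    (hm : ∀ A ∈ RX, ∀ B ∈ RY, m (A ×ˢ B) = μ A * ν B) :
    IsMeasure (supClosure (rectangles RX RY)) m where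
  additive _ hS _ hT hST :=
    addContent_union (isSetSemiring_rectangles hRX hRY).isSetRing_supClosure hS hT hST
  bounded _ hS := mnorm_lt_top_of_mem_supClosure hRX hRY hμ hν m hm hS
  shrink_cont _ h𝒮 hI := tendstoZeroOn_of_isShrinking hRX hRY hμ hν m hm h𝒮 hI

end Continuity

theorem product_of_two_measures_general {X Y K : Type*} [NontriviallyNormedField K]
    [IsUltrametricDist K]
    (RX : Set (Set X)) (RY : Set (Set Y))
    (hRX : IsCoveringRing RX) (hRY : IsCoveringRing RY)
    (μ : Set X → K) (ν : Set Y → K)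
    (hμ : IsMeasure RX μ) (hν : IsMeasure RY ν) :
    ∃ lam : Set (X × Y) → K,
      (∀ A ∈ RX, ∀ B ∈ RY, lam (A ×ˢ B) = μ A * ν B) ∧
      (∀ ⦃S⦄, RingGen (rectangles RX RY) S → ∀ ⦃S'⦄, RingGen (rectangles RX RY) S' →
        Disjoint S S' → lam (S ∪ S') = lam S + lam S') ∧
      IsMeasure {S | RingGen (rectangles RX RY) S} lam ∧
      (∀ A ∈ RX, ∀ B ∈ RY,
        mnorm {S | RingGen (rectangles RX RY) S} lam (A ×ˢ B)
          = mnorm RX μ A * mnorm RY ν B) ∧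
      (∀ lam' : Set (X × Y) → K,
        (∀ A ∈ RX, ∀ B ∈ RY, lam' (A ×ˢ B) = μ A * ν B) →
        (∀ ⦃S⦄, RingGen (rectangles RX RY) S → ∀ ⦃S'⦄,
          RingGen (rectangles RX RY) S' → Disjoint S S' →
          lam' (S ∪ S') = lam' S + lam' S') →
        ∀ S, RingGen (rectangles RX RY) S → lam' S = lam S) := by
  have := hμ.nonempty
  have := hν.nonempty
  have hRX := hRX.isSetRing
  have hRY := hRY.isSetRing
  have hC := isSetSemiring_rectangles hRX hRY
  let lam := (prodContent hRX hRY (hμ.addContent hRX) (hν.addContent hRY)).supClosure hC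
  have hlam : ∀ A ∈ RX, ∀ B ∈ RY, lam (A ×ˢ B) = μ A * ν B := fun A hA B hB =>
    (AddContent.supClosure_apply_of_mem hC _ ⟨A, hA, B, hB, rfl⟩).trans (prodContent_prod ..)
  have hmeasure := isMeasure_supClosure_rectangles hRX hRY hμ hν lam hlam
  simp only [ringGen_iff_mem_supClosure hC, ofPred_mem_eq]
  refine ⟨lam, hlam, fun S hS S' hS' => hmeasure.additive hS hS', hmeasure,
    fun A _ B _ => mnorm_supClosure_rectangles_prod hRX hRY lam hlam A B,
    fun lam' hlam' hadd' S hS => eq_addContent_of_union_eq_add hC lam ?_ hadd' hS⟩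
  rintro _ ⟨A, hA, B, hB, rfl⟩
  rw [hlam' A hA B hB, hlam A hA B hB]

/-- the product of two `K`-valued measures: there is a unique finitely
additive `λ` on the ring generated by the rectangles with `λ(A × B) = μ(A)ν(B)`; it is
a `K`-valued measure, and `‖A × B‖_λ = ‖A‖_μ · ‖B‖_ν` for all rectangles. -/
theorem product_of_two_measures {X Y K : Type*} [NontriviallyNormedField K]
    [IsUltrametricDist K] [CompleteSpace K]
    (RX : Set (Set X)) (RY : Set (Set Y))
    (hRX : IsCoveringRing RX) (hRY : IsCoveringRing RY)
    (μ : Set X → K) (ν : Set Y → K)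
    (hμ : IsMeasure RX μ) (hν : IsMeasure RY ν) :
    ∃ lam : Set (X × Y) → K,
      (∀ A ∈ RX, ∀ B ∈ RY, lam (A ×ˢ B) = μ A * ν B) ∧
      (∀ ⦃S⦄, RingGen (rectangles RX RY) S → ∀ ⦃S'⦄, RingGen (rectangles RX RY) S' →
        Disjoint S S' → lam (S ∪ S') = lam S + lam S') ∧
      IsMeasure {S | RingGen (rectangles RX RY) S} lam ∧
      (∀ A ∈ RX, ∀ B ∈ RY,
        mnorm {S | RingGen (rectangles RX RY) S} lam (A ×ˢ B)
          = mnorm RX μ A * mnorm RY ν B) ∧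
      (∀ lam' : Set (X × Y) → K,
        (∀ A ∈ RX, ∀ B ∈ RY, lam' (A ×ˢ B) = μ A * ν B) →
        (∀ ⦃S⦄, RingGen (rectangles RX RY) S → ∀ ⦃S'⦄,
          RingGen (rectangles RX RY) S' → Disjoint S S' →
          lam' (S ∪ S') = lam' S + lam' S') →
        ∀ S, RingGen (rectangles RX RY) S → lam' S = lam S) :=
  product_of_two_measures_general RX RY hRX hRY μ ν hμ hν

end NonArch
end
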